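/- arXiv:1903.10714 — 5 statements merged into one kernel-verified Lean document; each statement's English description precedes it below -/
import Mathlib

section
/- Let Q be an n×n real matrix (n ≥ 1) with nonnegative entries which is irreducible (for every pair of indices (i,j) there exists k ≥ 1 with (Q^k)_{ij} > 0). Then there exist a real number λ > 0 and a vector v ∈ ℝ^n with v_i > 0 for every i such that Q v = λ v. -/
open Matrix Finset

/-- Entries of powers of an entrywise-nonnegative matrix are nonnegative. -/
lemma pf_pow_entry_nonneg {n : ℕ} (Q : Matrix (Fin n) (Fin n) ℝ)
    (h : ∀ i j, 0 ≤ Q i j) (k : ℕ) : ∀ i j, 0 ≤ (Q ^ k) i j := by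
  induction k with
  | zero =>
      intro i j
      rw [pow_zero, Matrix.one_apply]
      split_ifs <;> norm_num
  | succ k ih =>
      intro i j
      rw [pow_succ, Matrix.mul_apply]
      exact Finset.sum_nonneg fun l _ => mul_nonneg (ih i l) (h l j)

/-- **Perron–Frobenius theorem (existence part).**
If `Q` is an `n × n` real matrix (`n ≥ 1`) with nonnegative entries which is
irreducible (for every pair of indices `(i,j)` there exists `k ≥ 1` with
`(Q ^ k) i j > 0`), then there exist `λ > 0` and a vector `v` with all
entries strictly positive such that `Q v = λ v`. -/
theorem perron_frobenius_exists
    (n : ℕ) (hn : 1 ≤ n) (Q : Matrix (Fin n) (Fin n) ℝ)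
    (hnonneg : ∀ i j, 0 ≤ Q i j)
    (hirr : ∀ i j, ∃ k : ℕ, 1 ≤ k ∧ 0 < (Q ^ k) i j) :
    ∃ (lam : ℝ) (v : Fin n → ℝ), 0 < lam ∧ (∀ i, 0 < v i) ∧
      Q.mulVec v = lam • v := by
  have hNe : Nonempty (Fin n) := ⟨⟨0, hn⟩⟩
  have hune : (Finset.univ : Finset (Fin n)).Nonempty := Finset.univ_nonempty
  -- choose exponents witnessing irreducibility and build a strictly positive
  -- matrix `P` which is a polynomial in `Q`.
  choose ke hke1 hke2 using hirr
  set m : ℕ := (Finset.univ : Finset (Fin n × Fin n)).sup (fun p => ke p.1 p.2) with hm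
  set P : Matrix (Fin n) (Fin n) ℝ := ∑ t ∈ Finset.range (m + 1), Q ^ t with hPdef
  have hPentry : ∀ i j, (∑ t ∈ Finset.range (m + 1), Q ^ t) i j
      = ∑ t ∈ Finset.range (m + 1), (Q ^ t) i j := by
    intro i j
    simp [Matrix.sum_apply]
  have hPpos : ∀ i j, 0 < P i j := by
    intro i j
    rw [hPdef, hPentry]
    refine Finset.sum_pos' (fun t _ => pf_pow_entry_nonneg Q hnonneg t i j) ?_
    refine ⟨ke i j, ?_, hke2 i j⟩
    exact Finset.mem_range.mpr (Nat.lt_succ_of_le (Finset.le_sup (f := fun p : Fin n × Fin n => ke p.1 p.2) (Finset.mem_univ (i, j))))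
  have hcomm : Q * P = P * Q := by
    rw [hPdef, Finset.mul_sum, Finset.sum_mul]
    exact Finset.sum_congr rfl fun t _ => ((Commute.refl Q).pow_right t).eq
  -- P maps nonzero nonnegative vectors to strictly positive vectors
  have hPmul : ∀ v : Fin n → ℝ, (∀ i, 0 ≤ v i) → (∃ j, 0 < v j) →
      ∀ i, 0 < P.mulVec v i := by
    intro v hv ⟨j0, hj0⟩ i
    rw [Matrix.mulVec, dotProduct]
    refine Finset.sum_pos' (fun j _ => mul_nonneg (hPpos i j).le (hv j)) ?_
    exact ⟨j0, Finset.mem_univ _, mul_pos (hPpos i j0) hj0⟩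
  -- each row of Q has a positive entry
  have hrow : ∀ i, ∃ l, 0 < Q i l := by
    intro i
    by_contra hcon
    push_neg at hcon
    have hQ0 : ∀ l, Q i l = 0 := fun l => le_antisymm (hcon l) (hnonneg i l)
    have := hke2 i i
    have hk := hke1 i i
    obtain ⟨k', hkk⟩ : ∃ k', ke i i = k' + 1 := ⟨ke i i - 1, by omega⟩
    rw [hkk, pow_succ', Matrix.mul_apply] at this
    simp [hQ0] at this
  -- Q maps strictly positive vectors to strictly positive vectors
  have hQposvec : ∀ v : Fin n → ℝ, (∀ i, 0 < v i) → ∀ i, 0 < Q.mulVec v i := by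
    intro v hv i
    obtain ⟨l, hl⟩ := hrow i
    rw [Matrix.mulVec, dotProduct]
    refine Finset.sum_pos' (fun j _ => mul_nonneg (hnonneg i j) (hv j).le) ?_
    exact ⟨l, Finset.mem_univ _, mul_pos hl (hv l)⟩
  -- the normalized image of the simplex under P
  set s : (Fin n → ℝ) → ℝ := fun v => ∑ i, P.mulVec v i with hs
  set φ : (Fin n → ℝ) → (Fin n → ℝ) := fun v => (s v)⁻¹ • P.mulVec v with hφ
  have hsimplex_pos : ∀ v ∈ stdSimplex ℝ (Fin n), ∀ i, 0 < P.mulVec v i := by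
    intro v hv i
    obtain ⟨hv0, hv1⟩ := hv
    refine hPmul v hv0 ?_ i
    by_contra hc
    push_neg at hc
    have : ∀ j, v j = 0 := fun j => le_antisymm (hc j) (hv0 j)
    simp [this] at hv1
  have hspos : ∀ v ∈ stdSimplex ℝ (Fin n), 0 < s v := by
    intro v hv
    exact Finset.sum_pos (fun i _ => hsimplex_pos v hv i) hune
  -- φ maps the simplex into itself with strictly positive entries
  have hφpos : ∀ v ∈ stdSimplex ℝ (Fin n), ∀ i, 0 < φ v i := by
    intro v hv i
    exact mul_pos (inv_pos.mpr (hspos v hv)) (hsimplex_pos v hv i)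
  have hφmem : ∀ v ∈ stdSimplex ℝ (Fin n), φ v ∈ stdSimplex ℝ (Fin n) := by
    intro v hv
    refine ⟨fun i => (hφpos v hv i).le, ?_⟩
    rw [hφ]
    simp only [Pi.smul_apply, smul_eq_mul, ← Finset.mul_sum]
    exact inv_mul_cancel₀ (hspos v hv).ne'
  -- continuity facts
  have hmulVec_cont : ∀ (A : Matrix (Fin n) (Fin n) ℝ) (i : Fin n),
      Continuous fun v : Fin n → ℝ => A.mulVec v i := by
    intro A i
    simp only [Matrix.mulVec, dotProduct]
    exact continuous_finset_sum _ fun j _ => continuous_const.mul (continuous_apply j)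
  have hscont : Continuous s := continuous_finset_sum _ fun i _ => hmulVec_cont P i
  have hφcont : ContinuousOn φ (stdSimplex ℝ (Fin n)) := by
    refine ContinuousOn.fun_smul ?_ ?_
    · exact ContinuousOn.inv₀ hscont.continuousOn (fun v hv => (hspos v hv).ne')
    · exact (continuous_pi fun i => hmulVec_cont P i).continuousOn
  -- the compact set K
  set K : Set (Fin n → ℝ) := φ '' stdSimplex ℝ (Fin n) with hK
  have hKcompact : IsCompact K := (isCompact_stdSimplex _ _).image_of_continuousOn hφcont
  have hKne : K.Nonempty := by
    refine ⟨φ (fun _ => (n : ℝ)⁻¹), ⟨(fun _ => (n : ℝ)⁻¹), ?_, rfl⟩⟩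
    constructor
    · intro i
      positivity
    · simp [Finset.sum_const, Finset.card_univ]
      field_simp
  have hKpos : ∀ w ∈ K, ∀ i, 0 < w i := by
    rintro w ⟨v, hv, rfl⟩ i
    exact hφpos v hv i
  have hKsub : K ⊆ stdSimplex ℝ (Fin n) := by
    rintro w ⟨v, hv, rfl⟩
    exact hφmem v hv
  -- the Collatz–Wielandt function
  set r : (Fin n → ℝ) → ℝ :=
    fun v => Finset.univ.inf' hune (fun i => Q.mulVec v i / v i) with hr
  have hrcont : ContinuousOn r {v : Fin n → ℝ | ∀ i, 0 < v i} := by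
    refine ContinuousOn.finset_inf'_apply hune ?_
    intro i _
    exact ContinuousOn.div (hmulVec_cont Q i).continuousOn
      (continuous_apply i).continuousOn (fun v hv => (hv i).ne')
  -- maximize r over K
  obtain ⟨v, hvK, hvmax⟩ := hKcompact.exists_isMaxOn hKne
    (hrcont.mono (fun w hw => hKpos w hw))
  have hvpos : ∀ i, 0 < v i := hKpos v hvK
  set lam : ℝ := r v with hlam
  have hlampos : 0 < lam := by
    rw [hlam, hr]
    rw [Finset.lt_inf'_iff]
    intro i _
    exact div_pos (hQposvec v hvpos i) (hvpos i)
  have hkey : ∀ i, lam * v i ≤ Q.mulVec v i := by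
    intro i
    have h1 : lam ≤ Q.mulVec v i / v i := Finset.inf'_le _ (Finset.mem_univ i)
    exact (le_div_iff₀ (hvpos i)).mp h1
  -- Q v = lam • v
  have heq : Q.mulVec v = lam • v := by
    by_contra hne
    set d : Fin n → ℝ := Q.mulVec v - lam • v with hd
    have hd0 : ∀ i, 0 ≤ d i := by
      intro i
      simp only [hd, Pi.sub_apply, Pi.smul_apply, smul_eq_mul, sub_nonneg]
      exact hkey i
    have hdne : ∃ j, 0 < d j := by
      by_contra hc
      push_neg at hc
      have : ∀ j, d j = 0 := fun j => le_antisymm (hc j) (hd0 j)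
      exact hne (by funext j; have := this j; simp only [hd, Pi.sub_apply,
        Pi.smul_apply, smul_eq_mul] at this ⊢; linarith)
    have hPd : ∀ i, 0 < P.mulVec d i := hPmul d hd0 hdne
    -- rewrite P d in terms of u = P v
    set u : Fin n → ℝ := P.mulVec v with hu
    have hupos : ∀ i, 0 < u i := fun i => hPmul v (fun j => (hvpos j).le) ⟨⟨0, hn⟩, hvpos _⟩ i
    have hPd_eq : P.mulVec d = Q.mulVec u - lam • u := by
      rw [hd, Matrix.mulVec_sub, Matrix.mulVec_smul, hu,
        Matrix.mulVec_mulVec, Matrix.mulVec_mulVec, ← hcomm, ← Matrix.mulVec_mulVec]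
    have hstrict : ∀ i, lam * u i < Q.mulVec u i := by
      intro i
      have := hPd i
      rw [hPd_eq] at this
      simp only [Pi.sub_apply, Pi.smul_apply, smul_eq_mul, sub_pos] at this
      exact this
    -- the normalized u lies in K and has larger r-value
    have hvmem : v ∈ stdSimplex ℝ (Fin n) := hKsub hvK
    have hwK : φ v ∈ K := ⟨v, hvmem, rfl⟩
    have hsv : 0 < s v := hspos v hvmem
    have hrw : lam < r (φ v) := by
      rw [hr, Finset.lt_inf'_iff]
      intro i _
      have hφv : φ v = (s v)⁻¹ • u := by rw [hφ, hu]
      rw [hφv, Matrix.mulVec_smul]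
      simp only [Pi.smul_apply, smul_eq_mul]
      rw [mul_div_mul_left _ _ (by positivity : ((s v)⁻¹ : ℝ) ≠ 0)]
      exact (lt_div_iff₀ (hupos i)).mpr (hstrict i)
    exact absurd (hvmax hwK) (not_le.mpr hrw)
  exact ⟨lam, v, hlampos, hvpos, heq⟩
end

section
/- Let Q = [q(i,j)] be an n×n irreducible nonnegative real matrix with Perron root λ > 0, and suppose every row sum κ_i := Σ_j q(i,j) is strictly positive; set p(j|i) := q(i,j)/κ_i, so that P = [p(j|i)] is a stochastic matrix. Then log λ = sup over all pairs (π, P̃), where P̃ = [p̃(j|i)] is an n×n stochastic matrix and π is a probability vector on {1,…,n} that is stationary for P̃ (i.e., Σ_i π_i p̃(j|i) = π_j for all j), of Σ_i π_i [ log κ_i − D(p̃(·|i) ‖ p(·|i)) ], where D(q‖p) := Σ_j q_j log(q_j/p_j) denotes the Kullback–Leibler divergence between probability vectors (with the conventions 0 log 0 = 0 and D(q‖p) = +∞ if q_j > 0 for some j with p_j = 0), and the supremum is taken in the extended reals (terms with D = +∞ contribute −∞). -/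
open scoped BigOperators

open Filter Topology

lemma ereal_coe_sum' {α : Type*} (s : Finset α) (f : α → ℝ) :
    ((∑ i ∈ s, f i : ℝ) : EReal) = ∑ i ∈ s, (f i : EReal) := by
  induction s using Finset.cons_induction with
  | empty => simp
  | cons a s ha ih => rw [Finset.sum_cons, Finset.sum_cons, EReal.coe_add, ih]

lemma exists_stationary' {n : ℕ} (hn : 1 ≤ n) (P : Fin n → Fin n → ℝ)
    (h0 : ∀ i j, 0 ≤ P i j) (h1 : ∀ i, ∑ j, P i j = 1) :
    ∃ π : Fin n → ℝ, (∀ i, 0 ≤ π i) ∧ (∑ i, π i = 1) ∧ (∀ j, ∑ i, π i * P i j = π j) := by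
  classical
  set T : (Fin n → ℝ) → (Fin n → ℝ) := fun x j => ∑ i, x i * P i j with hT
  have hmem : ∀ x ∈ stdSimplex ℝ (Fin n), T x ∈ stdSimplex ℝ (Fin n) := by
    rintro x ⟨hx0, hx1⟩
    refine ⟨fun j => Finset.sum_nonneg fun i _ => mul_nonneg (hx0 i) (h0 i j), ?_⟩
    rw [show (∑ j, T x j) = ∑ j, ∑ i, x i * P i j from rfl, Finset.sum_comm]
    simp only [← Finset.mul_sum, h1, mul_one]
    exact hx1
  set x0 : Fin n → ℝ := fun _ => (n : ℝ)⁻¹ with hx0def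
  have hnpos : (0:ℝ) < n := by exact_mod_cast hn
  have hx0mem : x0 ∈ stdSimplex ℝ (Fin n) := by
    refine ⟨fun i => by positivity, ?_⟩
    simp [hx0def, Finset.sum_const, Finset.card_univ]
    field_simp
  have hiter : ∀ k : ℕ, T^[k] x0 ∈ stdSimplex ℝ (Fin n) := by
    intro k
    induction k with
    | zero => simpa using hx0mem
    | succ k ih => rw [Function.iterate_succ_apply']; exact hmem _ ih
  set μ : ℕ → (Fin n → ℝ) := fun N => ((N+1 : ℕ) : ℝ)⁻¹ • ∑ k ∈ Finset.range (N+1), T^[k] x0 with hμ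
  have hNpos : ∀ N : ℕ, (0:ℝ) < ((N+1 : ℕ) : ℝ) := fun N => by positivity
  have hμmem : ∀ N, μ N ∈ stdSimplex ℝ (Fin n) := by
    intro N
    have hμap : ∀ i, μ N i = ((N+1:ℕ):ℝ)⁻¹ * ∑ k ∈ Finset.range (N+1), T^[k] x0 i := by
      intro i; simp [hμ, Finset.sum_apply]
    constructor
    · intro i
      rw [hμap i]
      exact mul_nonneg (by positivity) (Finset.sum_nonneg fun k _ => (hiter k).1 i)
    · rw [Finset.sum_congr rfl fun i _ => hμap i, ← Finset.mul_sum, Finset.sum_comm]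
      rw [Finset.sum_congr rfl fun k _ => (hiter k).2, Finset.sum_const, Finset.card_range,
        nsmul_eq_mul, mul_one]
      exact inv_mul_cancel₀ (hNpos N).ne'
  have hTiter : ∀ k, T (T^[k] x0) = T^[k+1] x0 := fun k => (Function.iterate_succ_apply' T k x0).symm
  have hkey : ∀ N, T (μ N) = μ N + ((N+1:ℕ):ℝ)⁻¹ • (T^[N+1] x0 - x0) := by
    intro N
    funext j
    have hμap : ∀ i, μ N i = ((N+1:ℕ):ℝ)⁻¹ * ∑ k ∈ Finset.range (N+1), T^[k] x0 i := by
      intro i; simp [hμ, Finset.sum_apply]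
    have hTμ : T (μ N) j = ((N+1:ℕ):ℝ)⁻¹ * ∑ k ∈ Finset.range (N+1), T^[k+1] x0 j := by
      calc T (μ N) j = ∑ i, (((N+1:ℕ):ℝ)⁻¹ * ∑ k ∈ Finset.range (N+1), T^[k] x0 i) * P i j :=
            Finset.sum_congr rfl fun i _ => by rw [hμap i]
      _ = ∑ i, ∑ k ∈ Finset.range (N+1), ((N+1:ℕ):ℝ)⁻¹ * (T^[k] x0 i * P i j) := by
            refine Finset.sum_congr rfl fun i _ => ?_
            rw [Finset.mul_sum, Finset.sum_mul]
            exact Finset.sum_congr rfl fun k _ => by ring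
      _ = ∑ k ∈ Finset.range (N+1), ∑ i, ((N+1:ℕ):ℝ)⁻¹ * (T^[k] x0 i * P i j) :=
            Finset.sum_comm
      _ = ∑ k ∈ Finset.range (N+1), ((N+1:ℕ):ℝ)⁻¹ * T^[k+1] x0 j := by
            refine Finset.sum_congr rfl fun k _ => ?_
            rw [← hTiter k, ← Finset.mul_sum]
      _ = ((N+1:ℕ):ℝ)⁻¹ * ∑ k ∈ Finset.range (N+1), T^[k+1] x0 j := by
            rw [Finset.mul_sum]
    have htel : ∑ k ∈ Finset.range (N+1), T^[k+1] x0 j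
        = (∑ k ∈ Finset.range (N+1), T^[k] x0 j) + T^[N+1] x0 j - x0 j := by
      rw [Finset.sum_range_succ' (fun k => T^[k] x0 j) N]
      rw [Finset.sum_range_succ (fun k => T^[k+1] x0 j) N]
      simp
      ring
    rw [hTμ, htel]
    simp only [Pi.add_apply, Pi.smul_apply, Pi.sub_apply, smul_eq_mul, hμ, Finset.sum_apply]
    ring
  obtain ⟨π, hπmem, φ, hφ, hconv⟩ := (isCompact_stdSimplex ℝ (Fin n)).tendsto_subseq hμmem
  have hTcont : Continuous T :=
    continuous_pi fun j => continuous_finset_sum _ fun i _ => (continuous_apply i).mul continuous_const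
  have hnorm1 : ∀ x ∈ stdSimplex ℝ (Fin n), ‖x‖ ≤ 1 := by
    intro x hx
    rw [pi_norm_le_iff_of_nonneg zero_le_one]
    intro i
    rw [Real.norm_eq_abs, abs_of_nonneg (hx.1 i)]
    calc x i ≤ ∑ j, x j := Finset.single_le_sum (fun j _ => hx.1 j) (Finset.mem_univ i)
    _ = 1 := hx.2
  have herr : Tendsto (fun m => ((φ m + 1:ℕ):ℝ)⁻¹ • (T^[φ m + 1] x0 - x0)) atTop (𝓝 0) := by
    refine squeeze_zero_norm (f := fun m => ((φ m + 1:ℕ):ℝ)⁻¹ • (T^[φ m + 1] x0 - x0))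
        (a := fun m => 2 / ((m:ℝ) + 1)) (fun m => ?_) ?_
    · rw [norm_smul]
      have h2 : ‖T^[φ m + 1] x0 - x0‖ ≤ 2 := by
        calc ‖T^[φ m + 1] x0 - x0‖ ≤ ‖T^[φ m + 1] x0‖ + ‖x0‖ := norm_sub_le _ _
        _ ≤ 1 + 1 := add_le_add (hnorm1 _ (hiter _)) (hnorm1 _ hx0mem)
        _ = 2 := by norm_num
      have h3 : ‖(((φ m + 1:ℕ):ℝ))⁻¹‖ ≤ ((m:ℝ)+1)⁻¹ := by
        rw [Real.norm_eq_abs, abs_of_nonneg (by positivity)]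
        apply inv_anti₀ (by positivity)
        have h4 : (m:ℝ) ≤ (φ m : ℝ) := by exact_mod_cast hφ.le_apply
        push_cast
        linarith
      calc ‖(((φ m + 1:ℕ):ℝ))⁻¹‖ * ‖T^[φ m + 1] x0 - x0‖ ≤ ((m:ℝ)+1)⁻¹ * 2 :=
            mul_le_mul h3 h2 (norm_nonneg _) (by positivity)
      _ = 2 / ((m:ℝ)+1) := by ring
    · have := tendsto_one_div_add_atTop_nhds_zero_nat (𝕜 := ℝ)
      have h2 := this.const_mul (2:ℝ)
      simpa [mul_comm, div_eq_mul_inv, mul_assoc] using h2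
  have hconv2 : Tendsto (fun m => T (μ (φ m))) atTop (𝓝 π) := by
    have : (fun m => T (μ (φ m))) = fun m => μ (φ m) + ((φ m + 1:ℕ):ℝ)⁻¹ • (T^[φ m + 1] x0 - x0) := by
      funext m; exact hkey (φ m)
    rw [this]
    simpa using hconv.add herr
  have hconv3 : Tendsto (fun m => T (μ (φ m))) atTop (𝓝 (T π)) :=
    (hTcont.tendsto π).comp hconv
  have hfix : T π = π := tendsto_nhds_unique hconv3 hconv2
  exact ⟨π, hπmem.1, hπmem.2, fun j => congrFun hfix j⟩


/-- Kullback–Leibler divergence between two probability vectors on `Fin n`,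
with the conventions `0 log 0 = 0` and `D(q‖p) = +∞` if `q j > 0` for some `j`
with `p j = 0`; valued in the extended reals. -/
noncomputable def klDivFin {n : ℕ} (q p : Fin n → ℝ) : EReal :=
  if ∀ j, 0 < q j → 0 < p j then
    ((∑ j, if 0 < q j then q j * Real.log (q j / p j) else 0 : ℝ) : EReal)
  else ⊤

/-- **Finite-state Donsker–Varadhan formula.**
Let `Q = [q(i,j)]` be an `n × n` irreducible nonnegative matrix with Perron root
`λ > 0` (positive eigenvalue with strictly positive eigenvector `v`), with all
row sums `κ i := ∑ j Q i j` strictly positive, and let `p(j|i) := Q i j / κ i`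
be the associated stochastic matrix.  Then `log λ` equals the supremum, taken in
the extended reals, over all pairs `(π, Pt)` of a stochastic matrix `Pt` and a
stationary probability vector `π` for `Pt`, of
`∑ i, π i * (log κ i − D(p̃(·|i) ‖ p(·|i)))`. -/
theorem donsker_varadhan_finite
    (n : ℕ) (hn : 1 ≤ n) (Q : Matrix (Fin n) (Fin n) ℝ)
    (hnonneg : ∀ i j, 0 ≤ Q i j)
    (hirr : ∀ i j, ∃ k : ℕ, 1 ≤ k ∧ 0 < (Q ^ k) i j)
    (lam : ℝ) (hlam : 0 < lam)
    (v : Fin n → ℝ) (hv : ∀ i, 0 < v i) (heig : Q.mulVec v = lam • v)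
    (κ : Fin n → ℝ) (hκ : ∀ i, κ i = ∑ j, Q i j) (hκpos : ∀ i, 0 < κ i)
    (p : Fin n → Fin n → ℝ) (hp : ∀ i j, p i j = Q i j / κ i) :
    (Real.log lam : EReal) =
      sSup {val : EReal |
        ∃ (π : Fin n → ℝ) (Pt : Fin n → Fin n → ℝ),
          (∀ i, 0 ≤ π i) ∧ (∑ i, π i = 1) ∧
          (∀ i j, 0 ≤ Pt i j) ∧ (∀ i, ∑ j, Pt i j = 1) ∧
          (∀ j, ∑ i, π i * Pt i j = π j) ∧
          val = ∑ i, (π i : EReal) *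
            ((Real.log (κ i) : EReal) - klDivFin (Pt i) (p i))} := by
  classical
  have hrowsum : ∀ i, ∑ j, Q i j * v j = lam * v i := by
    intro i
    have := congrFun heig i
    simpa [Matrix.mulVec, dotProduct] using this
  set Ps : Fin n → Fin n → ℝ := fun i j => Q i j * v j / (lam * v i) with hPsdef
  have hlv : ∀ i, 0 < lam * v i := fun i => mul_pos hlam (hv i)
  have hPs0 : ∀ i j, 0 ≤ Ps i j :=
    fun i j => div_nonneg (mul_nonneg (hnonneg i j) (hv j).le) (hlv i).le
  have hPs1 : ∀ i, ∑ j, Ps i j = 1 := by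
    intro i
    show (∑ j, Q i j * v j / (lam * v i)) = 1
    rw [← Finset.sum_div, hrowsum i, div_self (hlv i).ne']
  have hpQ : ∀ i j, 0 < p i j ↔ 0 < Q i j := by
    intro i j
    constructor
    · intro h
      by_contra hq
      have hq0 : Q i j = 0 := le_antisymm (not_lt.1 hq) (hnonneg i j)
      rw [hp i j, hq0, zero_div] at h
      exact lt_irrefl 0 h
    · intro h
      rw [hp i j]
      exact div_pos h (hκpos i)
  have hPsQ : ∀ i j, 0 < Ps i j ↔ 0 < Q i j := by
    intro i j
    constructor
    · intro h
      by_contra hq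
      have hq0 : Q i j = 0 := le_antisymm (not_lt.1 hq) (hnonneg i j)
      have : Ps i j = 0 := by show Q i j * v j / (lam * v i) = 0; rw [hq0]; simp
      rw [this] at h
      exact lt_irrefl 0 h
    · intro h
      exact div_pos (mul_pos h (hv j)) (hlv i)
  have hκp : ∀ i j, κ i * p i j = Q i j := by
    intro i j
    rw [hp i j, mul_comm, div_mul_eq_mul_div, mul_div_assoc, div_self (hκpos i).ne', mul_one]
  have hQPs : ∀ i j, 0 < Q i j → Real.log (Q i j)
      = Real.log lam + Real.log (v i) + Real.log (Ps i j) - Real.log (v j) := by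
    intro i j hQ
    have hPsij : 0 < Ps i j := (hPsQ i j).2 hQ
    have hformula : Q i j = lam * v i * Ps i j / v j := by
      show Q i j = lam * v i * (Q i j * v j / (lam * v i)) / v j
      rw [mul_div_assoc' (lam * v i), mul_div_cancel_left₀ _ (hlv i).ne',
        mul_div_assoc, div_self (hv j).ne', mul_one]
    calc Real.log (Q i j) = Real.log (lam * v i * Ps i j / v j) := by rw [← hformula]
      _ = Real.log lam + Real.log (v i) + Real.log (Ps i j) - Real.log (v j) := by
          rw [Real.log_div (mul_pos (hlv i) hPsij).ne' (hv j).ne',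
            Real.log_mul (hlv i).ne' hPsij.ne', Real.log_mul hlam.ne' (hv i).ne']
  -- termwise inequality
  have key : ∀ (Pt : Fin n → Fin n → ℝ) (i : Fin n), (∀ j, 0 ≤ Pt i j) →
      (∀ j, 0 < Pt i j → 0 < p i j) → ∀ j,
      Pt i j * Real.log (κ i) - (if 0 < Pt i j then Pt i j * Real.log (Pt i j / p i j) else 0)
        ≤ Pt i j * (Real.log lam + Real.log (v i) - Real.log (v j)) + (Ps i j - Pt i j) := by
    intro Pt i hPt0 hcond j
    by_cases hj : 0 < Pt i j
    · have hpj := hcond j hj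
      have hQj := (hpQ i j).1 hpj
      have hPsj := (hPsQ i j).2 hQj
      rw [if_pos hj]
      have e1 : Real.log (Pt i j / p i j) = Real.log (Pt i j) - Real.log (p i j) :=
        Real.log_div hj.ne' hpj.ne'
      have e2 : Real.log (κ i) + Real.log (p i j) = Real.log (Q i j) := by
        rw [← Real.log_mul (hκpos i).ne' hpj.ne', hκp i j]
      have e3 := hQPs i j hQj
      have e5 : Pt i j * (Real.log (Ps i j) - Real.log (Pt i j)) ≤ Ps i j - Pt i j := by
        have e4 : Real.log (Ps i j) - Real.log (Pt i j) ≤ Ps i j / Pt i j - 1 := by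
          have := Real.log_le_sub_one_of_pos (div_pos hPsj hj)
          rwa [Real.log_div hPsj.ne' hj.ne'] at this
        have h6 := mul_le_mul_of_nonneg_left e4 hj.le
        calc Pt i j * (Real.log (Ps i j) - Real.log (Pt i j))
            ≤ Pt i j * (Ps i j / Pt i j - 1) := h6
          _ = Ps i j - Pt i j := by field_simp
      have e6 : Real.log (κ i) - Real.log (Pt i j / p i j)
          = (Real.log lam + Real.log (v i) - Real.log (v j))
            + (Real.log (Ps i j) - Real.log (Pt i j)) := by
        rw [e1]; linarith
      calc Pt i j * Real.log (κ i) - Pt i j * Real.log (Pt i j / p i j)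
          = Pt i j * (Real.log (κ i) - Real.log (Pt i j / p i j)) := by ring
        _ = Pt i j * (Real.log lam + Real.log (v i) - Real.log (v j))
            + Pt i j * (Real.log (Ps i j) - Real.log (Pt i j)) := by rw [e6]; ring
        _ ≤ Pt i j * (Real.log lam + Real.log (v i) - Real.log (v j)) + (Ps i j - Pt i j) := by
            linarith
    · have hj0 : Pt i j = 0 := le_antisymm (not_lt.1 hj) (hPt0 j)
      rw [if_neg hj, hj0]
      simpa using hPs0 i j
  -- termwise equality for Ps
  have keyeq : ∀ i j,
      Ps i j * Real.log (κ i) - (if 0 < Ps i j then Ps i j * Real.log (Ps i j / p i j) else 0)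
        = Ps i j * (Real.log lam + Real.log (v i) - Real.log (v j)) := by
    intro i j
    by_cases hj : 0 < Ps i j
    · have hQj := (hPsQ i j).1 hj
      have hpj := (hpQ i j).2 hQj
      rw [if_pos hj]
      have e1 : Real.log (Ps i j / p i j) = Real.log (Ps i j) - Real.log (p i j) :=
        Real.log_div hj.ne' hpj.ne'
      have e2 : Real.log (κ i) + Real.log (p i j) = Real.log (Q i j) := by
        rw [← Real.log_mul (hκpos i).ne' hpj.ne', hκp i j]
      have e3 := hQPs i j hQj
      have e6 : Real.log (κ i) - Real.log (Ps i j / p i j)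
          = Real.log lam + Real.log (v i) - Real.log (v j) := by
        rw [e1]; linarith
      calc Ps i j * Real.log (κ i) - Ps i j * Real.log (Ps i j / p i j)
          = Ps i j * (Real.log (κ i) - Real.log (Ps i j / p i j)) := by ring
        _ = Ps i j * (Real.log lam + Real.log (v i) - Real.log (v j)) := by rw [e6]
    · have hj0 : Ps i j = 0 := le_antisymm (not_lt.1 hj) (hPs0 i j)
      rw [if_neg hj, hj0]
      ring
  -- row-level inequality
  have row_ineq : ∀ (Pt : Fin n → Fin n → ℝ) (i : Fin n), (∀ j, 0 ≤ Pt i j) →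
      (∑ j, Pt i j = 1) → (∀ j, 0 < Pt i j → 0 < p i j) →
      Real.log (κ i) - (∑ j, if 0 < Pt i j then Pt i j * Real.log (Pt i j / p i j) else 0)
        ≤ Real.log lam + Real.log (v i) - ∑ j, Pt i j * Real.log (v j) := by
    intro Pt i hPt0 hPt1 hcond
    have h1 : Real.log (κ i)
        - (∑ j, if 0 < Pt i j then Pt i j * Real.log (Pt i j / p i j) else 0)
        = ∑ j, (Pt i j * Real.log (κ i)
            - if 0 < Pt i j then Pt i j * Real.log (Pt i j / p i j) else 0) := by
      rw [Finset.sum_sub_distrib, ← Finset.sum_mul, hPt1, one_mul]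
    have h2 : ∑ j, (Pt i j * (Real.log lam + Real.log (v i) - Real.log (v j))
        + (Ps i j - Pt i j))
        = Real.log lam + Real.log (v i) - ∑ j, Pt i j * Real.log (v j) := by
      have h3 : ∑ j, Pt i j * (Real.log lam + Real.log (v i) - Real.log (v j))
          = (∑ j, Pt i j) * (Real.log lam + Real.log (v i))
            - ∑ j, Pt i j * Real.log (v j) := by
        calc ∑ j, Pt i j * (Real.log lam + Real.log (v i) - Real.log (v j))
            = ∑ j, (Pt i j * (Real.log lam + Real.log (v i)) - Pt i j * Real.log (v j)) :=
              Finset.sum_congr rfl fun j _ => by ring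
          _ = (∑ j, Pt i j * (Real.log lam + Real.log (v i)))
                - ∑ j, Pt i j * Real.log (v j) := Finset.sum_sub_distrib _ _
          _ = (∑ j, Pt i j) * (Real.log lam + Real.log (v i))
                - ∑ j, Pt i j * Real.log (v j) := by rw [Finset.sum_mul]
      rw [Finset.sum_add_distrib, Finset.sum_sub_distrib, hPs1 i, hPt1, h3, hPt1]
      ring
    rw [h1]
    exact le_trans (Finset.sum_le_sum fun j _ => key Pt i hPt0 hcond j) (le_of_eq h2)
  -- row-level equality for Ps
  have row_eq : ∀ i,
      Real.log (κ i) - (∑ j, if 0 < Ps i j then Ps i j * Real.log (Ps i j / p i j) else 0)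
        = Real.log lam + Real.log (v i) - ∑ j, Ps i j * Real.log (v j) := by
    intro i
    have h1 : Real.log (κ i)
        - (∑ j, if 0 < Ps i j then Ps i j * Real.log (Ps i j / p i j) else 0)
        = ∑ j, (Ps i j * Real.log (κ i)
            - if 0 < Ps i j then Ps i j * Real.log (Ps i j / p i j) else 0) := by
      rw [Finset.sum_sub_distrib, ← Finset.sum_mul, hPs1 i, one_mul]
    have h3 : ∑ j, Ps i j * (Real.log lam + Real.log (v i) - Real.log (v j))
        = (∑ j, Ps i j) * (Real.log lam + Real.log (v i))
          - ∑ j, Ps i j * Real.log (v j) := by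
      calc ∑ j, Ps i j * (Real.log lam + Real.log (v i) - Real.log (v j))
          = ∑ j, (Ps i j * (Real.log lam + Real.log (v i)) - Ps i j * Real.log (v j)) :=
            Finset.sum_congr rfl fun j _ => by ring
        _ = (∑ j, Ps i j * (Real.log lam + Real.log (v i)))
              - ∑ j, Ps i j * Real.log (v j) := Finset.sum_sub_distrib _ _
        _ = (∑ j, Ps i j) * (Real.log lam + Real.log (v i))
              - ∑ j, Ps i j * Real.log (v j) := by rw [Finset.sum_mul]
    rw [h1, Finset.sum_congr rfl fun j _ => keyeq i j, h3, hPs1 i]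
    ring
  -- aggregation
  have agg : ∀ (π Pt : Fin n → Fin n → ℝ) (_ : True), True := fun _ _ _ => trivial
  have agg2 : ∀ (π : Fin n → ℝ) (Pt : Fin n → Fin n → ℝ), (∑ i, π i = 1) →
      (∀ j, ∑ i, π i * Pt i j = π j) →
      ∑ i, π i * (Real.log lam + Real.log (v i) - ∑ j, Pt i j * Real.log (v j))
        = Real.log lam := by
    intro π Pt hπ1 hstat
    have hdouble : ∑ i, π i * ∑ j, Pt i j * Real.log (v j) = ∑ i, π i * Real.log (v i) := by
      calc ∑ i, π i * ∑ j, Pt i j * Real.log (v j)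
          = ∑ i, ∑ j, π i * Pt i j * Real.log (v j) := by
            refine Finset.sum_congr rfl fun i _ => ?_
            rw [Finset.mul_sum]
            exact Finset.sum_congr rfl fun j _ => by ring
        _ = ∑ j, ∑ i, π i * Pt i j * Real.log (v j) := Finset.sum_comm
        _ = ∑ j, π j * Real.log (v j) := by
            refine Finset.sum_congr rfl fun j _ => ?_
            rw [← Finset.sum_mul, hstat j]
    calc ∑ i, π i * (Real.log lam + Real.log (v i) - ∑ j, Pt i j * Real.log (v j))
        = ∑ i, (π i * (Real.log lam + Real.log (v i))
            - π i * ∑ j, Pt i j * Real.log (v j)) := by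
          exact Finset.sum_congr rfl fun i _ => by ring
      _ = (∑ i, π i * (Real.log lam + Real.log (v i)))
            - ∑ i, π i * ∑ j, Pt i j * Real.log (v j) := Finset.sum_sub_distrib _ _
      _ = (∑ i, (π i * Real.log lam + π i * Real.log (v i)))
            - ∑ i, π i * Real.log (v i) := by
          rw [hdouble]
          exact congrArg (· - ∑ i, π i * Real.log (v i))
            (Finset.sum_congr rfl fun i _ => by ring)
      _ = Real.log lam := by
          rw [Finset.sum_add_distrib, ← Finset.sum_mul, hπ1, one_mul]
          ring
  refine le_antisymm ?_ ?_
  · -- witness direction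
    obtain ⟨π, hπ0, hπ1, hstat⟩ := exists_stationary' hn Ps hPs0 hPs1
    apply le_sSup
    refine ⟨π, Ps, hπ0, hπ1, hPs0, hPs1, hstat, ?_⟩
    have hfin : ∀ i, klDivFin (Ps i) (p i)
        = ((∑ j, if 0 < Ps i j then Ps i j * Real.log (Ps i j / p i j) else 0 : ℝ) : EReal) := by
      intro i
      simp only [klDivFin]
      rw [if_pos]
      intro j hj
      exact (hpQ i j).2 ((hPsQ i j).1 hj)
    have hterm : ∀ i, (π i : EReal) * ((Real.log (κ i) : EReal) - klDivFin (Ps i) (p i))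
        = ((π i * (Real.log (κ i)
            - ∑ j, if 0 < Ps i j then Ps i j * Real.log (Ps i j / p i j) else 0) : ℝ) : EReal) := by
      intro i
      rw [hfin i, ← EReal.coe_sub, ← EReal.coe_mul]
    rw [Finset.sum_congr rfl fun i _ => hterm i, ← ereal_coe_sum']
    rw [EReal.coe_eq_coe_iff]
    rw [Finset.sum_congr rfl fun i _ => by rw [row_eq i]]
    exact (agg2 π Ps hπ1 hstat).symm
  · -- upper bound direction
    apply sSup_le
    rintro val ⟨π, Pt, hπ0, hπ1, hPt0, hPt1, hstat, rfl⟩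
    by_cases hc : ∀ i, 0 < π i → ∀ j, 0 < Pt i j → 0 < p i j
    · set D : Fin n → ℝ :=
        fun i => ∑ j, if 0 < Pt i j then Pt i j * Real.log (Pt i j / p i j) else 0 with hD
      set r : Fin n → ℝ :=
        fun i => if 0 < π i then π i * (Real.log (κ i) - D i) else 0 with hr
      have hterm : ∀ i, (π i : EReal) * ((Real.log (κ i) : EReal) - klDivFin (Pt i) (p i))
          = ((r i : ℝ) : EReal) := by
        intro i
        by_cases hπi : 0 < π i
        · have : klDivFin (Pt i) (p i) = ((D i : ℝ) : EReal) := by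
            simp only [klDivFin, hD]
            rw [if_pos (hc i hπi)]
          have hri : r i = π i * (Real.log (κ i) - D i) := by
            rw [hr]
            exact if_pos hπi
          rw [this, ← EReal.coe_sub, ← EReal.coe_mul, hri]
        · have hπ0i : π i = 0 := le_antisymm (not_lt.1 hπi) (hπ0 i)
          have hri : r i = 0 := by
            rw [hr]
            exact if_neg hπi
          rw [hri, hπ0i]
          simp
      rw [Finset.sum_congr rfl fun i _ => hterm i, ← ereal_coe_sum']
      rw [EReal.coe_le_coe_iff]
      have hri : ∀ i, r i ≤ π i * (Real.log lam + Real.log (v i)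
          - ∑ j, Pt i j * Real.log (v j)) := by
        intro i
        by_cases hπi : 0 < π i
        · rw [hr]
          simp only [if_pos hπi]
          exact mul_le_mul_of_nonneg_left
            (row_ineq Pt i (hPt0 i) (hPt1 i) (hc i hπi)) (hπ0 i)
        · have hπ0i : π i = 0 := le_antisymm (not_lt.1 hπi) (hπ0 i)
          have hri : r i = 0 := by
            rw [hr]
            exact if_neg hπi
          rw [hri, hπ0i, zero_mul]
      calc ∑ i, r i
          ≤ ∑ i, π i * (Real.log lam + Real.log (v i) - ∑ j, Pt i j * Real.log (v j)) :=
            Finset.sum_le_sum fun i _ => hri i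
        _ = Real.log lam := agg2 π Pt hπ1 hstat
    · rw [not_forall] at hc
      obtain ⟨i0, hi0⟩ := hc
      rw [Classical.not_imp] at hi0
      have hkl : klDivFin (Pt i0) (p i0) = ⊤ := by
        simp only [klDivFin]
        rw [if_neg hi0.2]
      have hbot : (π i0 : EReal) * ((Real.log (κ i0) : EReal) - klDivFin (Pt i0) (p i0)) = ⊥ := by
        rw [hkl, EReal.sub_top]
        exact EReal.coe_mul_bot_of_pos hi0.1
      have hsum : (∑ i, (π i : EReal) * ((Real.log (κ i) : EReal) - klDivFin (Pt i) (p i))) = ⊥ := by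
        rw [← Finset.add_sum_erase _ _ (Finset.mem_univ i0), hbot, EReal.bot_add]
      rw [hsum]
      exact bot_le
end

section
/- In the discrete-time controlled chain setting, the operator T defined by Tf(x) := sup_{u∈U} ∫_S e^{r(x,u,y)} f(y) p(dy|x,u) maps C(S) into C(S) and is: (i) order preserving (f ≤ g implies Tf ≤ Tg) and strictly increasing (f ≤ g, f ≠ g implies Tf ≤ Tg with Tf ≠ Tg on the cone of nonnegative functions); (ii) positively 1-homogeneous (T(af) = aTf for all a > 0); (iii) strongly positive (if f ≥ 0 and f is not identically zero then Tf(x) > 0 for every x ∈ S); and (iv) compact (the image under T of any bounded subset of C(S) is relatively compact in the uniform norm). -/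
/-!
Write `T = fiberSup ∘ A`, where `A f (x, u) = ∫ e^{r(x,u,y)} f(y) p(dy|x,u)` and `fiberSup`
takes the supremum over the compact fibre `U`. The equicontinuity hypothesis says precisely
that `(x, u) ↦ p(·|x,u)`, viewed as a functional on `C(S)`, is continuous for the dual norm;
multiplying by the continuous weight `e^r` keeps this, so `A` is given by a norm-continuous
family of functionals on the compact space `S × U` and is compact by Arzelà–Ascoli. `fiberSup`
is 1-Lipschitz, hence `T` is compact too. Full support and positivity of the weight make every
functional strictly monotone, and since the supremum over `U` is attained, `f < g` forces
`T f < T g` at every point.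
-/

open MeasureTheory

section FiberSup

variable {X U : Type*} [TopologicalSpace X] [TopologicalSpace U] [CompactSpace U]

theorem bddAbove_range_fiber (g : C(X × U, ℝ)) (x : X) :
    BddAbove (Set.range fun u => g (x, u)) :=
  (isCompact_range (g.continuous.comp (Continuous.prodMk_right x))).bddAbove

noncomputable def fiberSup (g : C(X × U, ℝ)) : C(X, ℝ) where
  toFun x := ⨆ u, g (x, u)
  continuous_toFun := by
    have := isCompact_univ.continuous_sSup (f := fun x u => g (x, u)) g.continuous
    simp only [Set.image_univ] at this
    exact this

theorem fiberSup_mono : Monotone (fiberSup : C(X × U, ℝ) → C(X, ℝ)) :=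
  fun _ h hgh x => ciSup_mono (bddAbove_range_fiber h x) fun u => hgh (x, u)

theorem fiberSup_smul {a : ℝ} (ha : 0 ≤ a) (g : C(X × U, ℝ)) :
    fiberSup (a • g) = a • fiberSup g := by
  ext x
  exact (Real.mul_iSup_of_nonneg ha _).symm

variable [Nonempty U]

theorem fiberSup_zero : fiberSup (0 : C(X × U, ℝ)) = 0 := by
  ext x
  exact ciSup_const

theorem fiberSup_lt_fiberSup {g h : C(X × U, ℝ)} (hgh : ∀ q, g q < h q) (x : X) :
    fiberSup g x < fiberSup h x := by
  obtain ⟨u, -, hu⟩ := isCompact_univ.exists_isMaxOn Set.univ_nonempty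
    (g.continuous.comp (Continuous.prodMk_right x)).continuousOn
  calc fiberSup g x ≤ g (x, u) := ciSup_le fun v => hu (Set.mem_univ v)
    _ < h (x, u) := hgh (x, u)
    _ ≤ fiberSup h x := le_ciSup (bddAbove_range_fiber h x) u

theorem fiberSup_le_add_dist [CompactSpace X] (g h : C(X × U, ℝ)) (x : X) :
    fiberSup g x ≤ fiberSup h x + dist g h :=
  ciSup_le fun u => calc
    g (x, u) ≤ h (x, u) + dist g h := by
      linarith [Real.sub_le_dist (g (x, u)) (h (x, u)),
        ContinuousMap.dist_apply_le_dist (f := g) (g := h) (x, u)]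
    _ ≤ fiberSup h x + dist g h := by gcongr; exact le_ciSup (bddAbove_range_fiber h x) u

theorem lipschitzWith_fiberSup [CompactSpace X] :
    LipschitzWith 1 (fiberSup : C(X × U, ℝ) → C(X, ℝ)) := by
  refine LipschitzWith.of_dist_le_mul fun g h => ?_
  rw [NNReal.coe_one, one_mul, ContinuousMap.dist_le dist_nonneg]
  intro x
  rw [Real.dist_eq, abs_sub_le_iff]
  exact ⟨by linarith [fiberSup_le_add_dist g h x],
    by linarith [fiberSup_le_add_dist h g x, dist_comm g h]⟩

end FiberSup

theorem ContinuousMap.isCompact_closure_of_equicontinuous {X F : Type*} [TopologicalSpace X]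
    [CompactSpace X] [MetricSpace F] [ProperSpace F] {s : Set C(X, F)}
    (hs : Equicontinuous ((↑) : s → X → F))
    (hb : ∀ x, Bornology.IsBounded ((fun f : C(X, F) => f x) '' s)) :
    IsCompact (closure s) :=
  have : T2Space (UniformOnFun X F {K : Set X | IsCompact K}) := UniformOnFun.t2Space_of_covering
    (Set.eq_univ_of_forall fun x => Set.mem_sUnion.mpr ⟨{x}, isCompact_singleton, rfl⟩)
  ArzelaAscoli.isCompact_closure_of_isClosedEmbedding (fun _ hK => hK)
    ContinuousMap.isUniformEmbedding_toUniformOnFunIsCompact.isClosedEmbedding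
    (fun K _ => hs.equicontinuousOn K)
    fun _ _ x _ => ⟨closure ((fun f : C(X, F) => f x) '' s), (hb x).isCompact_closure,
      fun f hf => subset_closure ⟨f, hf, rfl⟩⟩

section PointwiseApply

variable {X 𝕜 E F : Type*} [TopologicalSpace X] [CompactSpace X] [NontriviallyNormedField 𝕜]
  [NormedAddCommGroup E] [NormedSpace 𝕜 E] [NormedAddCommGroup F] [NormedSpace 𝕜 F]

noncomputable def pointwiseApplyCLM (K : C(X, E →L[𝕜] F)) : E →L[𝕜] C(X, F) :=
  LinearMap.mkContinuous
    { toFun := fun f =>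
        ⟨fun x => K x f, (ContinuousLinearMap.apply 𝕜 F f).continuous.comp K.continuous⟩
      map_add' := fun f g => by ext x; exact (K x).map_add f g
      map_smul' := fun c f => by ext x; exact (K x).map_smul c f }
    ‖K‖ fun f => (ContinuousMap.norm_le _ (by positivity)).mpr fun x =>
      (K x).le_of_opNorm_le (K.norm_coe_le_norm x) f

theorem isCompactOperator_pointwiseApplyCLM [ProperSpace F] (K : C(X, E →L[𝕜] F)) :
    IsCompactOperator (pointwiseApplyCLM K) := by
  rw [isCompactOperator_iff_exists_mem_nhds_isCompact_closure_image]
  refine ⟨Metric.closedBall 0 1, Metric.closedBall_mem_nhds 0 one_pos,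
    ContinuousMap.isCompact_closure_of_equicontinuous ?_ fun x => ?_⟩
  · intro x₀
    rw [Metric.equicontinuousAt_iff_right]
    intro ε hε
    have hK : ∀ᶠ x in nhds x₀, dist (K x₀) (K x) < ε :=
      (Metric.tendsto_nhds.mp (K.continuous.tendsto x₀) ε hε).mono fun _ h => by
        rwa [dist_comm]
    filter_upwards [hK] with x hx
    rintro ⟨_, f, hf, rfl⟩
    calc dist (K x₀ f) (K x f) = ‖(K x₀ - K x) f‖ := by simp [dist_eq_norm]
      _ ≤ ‖K x₀ - K x‖ * 1 := (K x₀ - K x).le_opNorm_of_le (mem_closedBall_zero_iff.mp hf)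
      _ < ε := by rwa [mul_one, ← dist_eq_norm]
  · refine (Metric.isBounded_closedBall (x := (0 : F)) (r := ‖K‖)).subset ?_
    rintro _ ⟨_, ⟨f, hf, rfl⟩, rfl⟩
    rw [mem_closedBall_zero_iff]
    exact ((K x).le_of_opNorm_le_of_le (K.norm_coe_le_norm x)
      (mem_closedBall_zero_iff.mp hf)).trans_eq (mul_one _)

end PointwiseApply

section IntegralFunctional

variable {S : Type*} [TopologicalSpace S] [CompactSpace S] [MeasurableSpace S]
  [OpensMeasurableSpace S]

theorem ContinuousMap.integrable_of_compactSpace (f : C(S, ℝ)) (μ : Measure S)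
    [IsFiniteMeasure μ] : Integrable f μ :=
  f.continuous.integrable_of_hasCompactSupport (HasCompactSupport.of_compactSpace _)

noncomputable def ContinuousMap.integralCLM (μ : Measure S) [IsFiniteMeasure μ] :
    C(S, ℝ) →L[ℝ] ℝ :=
  LinearMap.mkContinuous
    { toFun := fun f => ∫ y, f y ∂μ
      map_add' := fun f g =>
        integral_add (f.integrable_of_compactSpace μ) (g.integrable_of_compactSpace μ)
      map_smul' := fun c f => integral_const_mul c f }
    (μ.real Set.univ) fun f =>
      (norm_integral_le_of_norm_le_const
        (Filter.Eventually.of_forall f.norm_coe_le_norm)).trans_eq (mul_comm _ _)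

theorem ContinuousMap.integralCLM_apply (μ : Measure S) [IsFiniteMeasure μ] (f : C(S, ℝ)) :
    integralCLM μ f = ∫ y, f y ∂μ := rfl

theorem ContinuousMap.strictMono_integralCLM (μ : Measure S) [IsFiniteMeasure μ]
    [μ.IsOpenPosMeasure] : StrictMono (integralCLM μ) := by
  intro f g hfg
  obtain ⟨y, hy⟩ := DFunLike.ne_iff.mp hfg.ne
  have hpos : 0 < ∫ y, (g - f) y ∂μ :=
    (g - f).continuous.integral_pos_of_hasCompactSupport_nonneg_nonzero
      (HasCompactSupport.of_compactSpace _) (fun y => sub_nonneg.mpr (hfg.le y))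
      (sub_ne_zero.mpr hy.symm)
  rw [← integralCLM_apply, map_sub] at hpos
  exact sub_pos.mp hpos

end IntegralFunctional

theorem ContinuousMap.strictMono_mul_left_of_pos {S : Type*} [TopologicalSpace S]
    {w : C(S, ℝ)} (hw : ∀ y, 0 < w y) : StrictMono (w * ·) := by
  intro f g hfg
  refine lt_of_le_of_ne (fun y => mul_le_mul_of_nonneg_left (hfg.le y) (hw y).le)
    fun h => hfg.ne ?_
  ext y
  exact mul_left_cancel₀ (hw y).ne' (DFunLike.congr_fun h y)

theorem continuous_of_equicontinuous_apply_unitBall {X 𝕜 E F : Type*} [TopologicalSpace X]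
    [NontriviallyNormedField 𝕜] [NormedAlgebra ℝ 𝕜] [NormedAddCommGroup E]
    [NormedSpace 𝕜 E] [NormedAddCommGroup F] [NormedSpace 𝕜 F] {φ : X → E →L[𝕜] F}
    (h : Equicontinuous fun (g : {g : E // ‖g‖ ≤ 1}) x => φ x g) : Continuous φ := by
  refine continuous_iff_continuousAt.mpr fun x₀ => Metric.tendsto_nhds.mpr fun ε hε => ?_
  filter_upwards [Metric.equicontinuousAt_iff_right.mp (h x₀) (ε / 2) (half_pos hε)] with x hx
  refine lt_of_le_of_lt ?_ (half_lt_self hε)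
  rw [dist_eq_norm]
  refine ContinuousLinearMap.opNorm_le_of_unit_norm (half_pos hε).le fun g hg => ?_
  rw [sub_apply, ← dist_eq_norm, dist_comm]
  exact (hx ⟨g, hg.le⟩).le

section SupOperator

variable {X U E : Type*} [TopologicalSpace X] [CompactSpace X] [TopologicalSpace U]
  [CompactSpace U] [NormedAddCommGroup E] [NormedSpace ℝ E]

noncomputable def supOperator (K : C(X × U, E →L[ℝ] ℝ)) (f : E) : C(X, ℝ) :=
  fiberSup (pointwiseApplyCLM K f)

theorem supOperator_smul (K : C(X × U, E →L[ℝ] ℝ)) {a : ℝ} (ha : 0 ≤ a) (f : E) :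
    supOperator K (a • f) = a • supOperator K f := by
  rw [supOperator, map_smul, fiberSup_smul ha, supOperator]

theorem supOperator_mono [Preorder E] {K : C(X × U, E →L[ℝ] ℝ)}
    (hK : ∀ q, Monotone (K q)) : Monotone (supOperator K) :=
  fun _ _ hfg => fiberSup_mono fun q => hK q hfg

variable [Nonempty U]

theorem supOperator_zero (K : C(X × U, E →L[ℝ] ℝ)) : supOperator K 0 = 0 := by
  rw [supOperator, map_zero, fiberSup_zero]

theorem supOperator_lt_supOperator [Preorder E] {K : C(X × U, E →L[ℝ] ℝ)}
    (hK : ∀ q, StrictMono (K q)) {f g : E} (hfg : f < g) (x : X) :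
    supOperator K f x < supOperator K g x :=
  fiberSup_lt_fiberSup (fun q => hK q hfg) x

theorem isCompact_closure_image_supOperator (K : C(X × U, E →L[ℝ] ℝ)) {B : Set E}
    (hB : Bornology.IsBounded B) : IsCompact (closure (supOperator K '' B)) := by
  have hA := (isCompactOperator_pointwiseApplyCLM K).isCompact_closure_image_of_bounded hB
  have hT := hA.image lipschitzWith_fiberSup.continuous
  refine hT.of_isClosed_subset isClosed_closure (closure_minimal ?_ hT.isClosed)
  rw [show supOperator K = fiberSup ∘ pointwiseApplyCLM K from rfl, Set.image_comp]
  exact Set.image_mono subset_closure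

end SupOperator

section WeightedKernel

variable {X S : Type*} [TopologicalSpace X] [TopologicalSpace S] [CompactSpace S]
  [MeasurableSpace S] [OpensMeasurableSpace S] (μ : X → Measure S)
  [∀ x, IsFiniteMeasure (μ x)]

noncomputable def weightedKernel (hμ : Continuous fun x => ContinuousMap.integralCLM (μ x))
    (w : C(X, C(S, ℝ))) : C(X, C(S, ℝ) →L[ℝ] ℝ) :=
  ⟨fun x => (ContinuousMap.integralCLM (μ x)).comp (ContinuousLinearMap.mul ℝ C(S, ℝ) (w x)),
    hμ.clm_comp ((ContinuousLinearMap.mul ℝ C(S, ℝ)).continuous.comp w.continuous)⟩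

theorem strictMono_weightedKernel [∀ x, (μ x).IsOpenPosMeasure]
    (hμ : Continuous fun x => ContinuousMap.integralCLM (μ x)) {w : C(X, C(S, ℝ))}
    (hw : ∀ x y, 0 < w x y) (x : X) : StrictMono (weightedKernel μ hμ w x) :=
  (ContinuousMap.strictMono_integralCLM (μ x)).comp
    (ContinuousMap.strictMono_mul_left_of_pos (hw x))

end WeightedKernel

theorem riskSensitive_operator_properties_general
    {S U : Type*} [MetricSpace S] [CompactSpace S]
    [MeasurableSpace S] [BorelSpace S]
    [MetricSpace U] [CompactSpace U] [Nonempty U]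
    (r : S → U → S → ℝ)
    (hr : Continuous fun q : S × U × S => r q.1 q.2.1 q.2.2)
    (p : S → U → Measure S)
    (hprob : ∀ x u, IsProbabilityMeasure (p x u))
    (hsupp : ∀ x u, ∀ O : Set S, IsOpen O → O.Nonempty → 0 < p x u O)
    (hequi : Equicontinuous fun (f : {f : C(S, ℝ) // ‖f‖ ≤ 1}) (xu : S × U) =>
        ∫ y, f.1 y ∂(p xu.1 xu.2)) :
    ∃ T : C(S, ℝ) → C(S, ℝ),
      (∀ (f : C(S, ℝ)) (x : S),
          T f x = ⨆ u : U, ∫ y, Real.exp (r x u y) * f y ∂(p x u)) ∧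
      -- (i) order preserving …
      (∀ f g : C(S, ℝ), f ≤ g → T f ≤ T g) ∧
      -- … and strictly increasing on the cone of nonnegative functions
      (∀ f g : C(S, ℝ), 0 ≤ f → f ≤ g → f ≠ g → T f ≤ T g ∧ T f ≠ T g) ∧
      -- (ii) positively 1-homogeneous
      (∀ (a : ℝ), 0 < a → ∀ f : C(S, ℝ), T (a • f) = a • T f) ∧
      -- (iii) strongly positive
      (∀ f : C(S, ℝ), 0 ≤ f → f ≠ 0 → ∀ x, 0 < T f x) ∧
      -- (iv) compact
      (∀ B : Set C(S, ℝ), Bornology.IsBounded B →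
        IsCompact (closure (T '' B))) := by
  have hfullSupport : ∀ q : S × U, (p q.1 q.2).IsOpenPosMeasure :=
    fun q => ⟨fun O hO hne => (hsupp q.1 q.2 O hO hne).ne'⟩
  let w : C(S × U, C(S, ℝ)) := ContinuousMap.curry
    ⟨fun q => Real.exp (r q.1.1 q.1.2 q.2),
      Real.continuous_exp.comp (hr.comp (Homeomorph.prodAssoc S U S).continuous)⟩
  let K := weightedKernel (fun q : S × U => p q.1 q.2)
    (continuous_of_equicontinuous_apply_unitBall hequi) w
  have hK : ∀ q, StrictMono (K q) :=
    strictMono_weightedKernel _ _ fun _ _ => Real.exp_pos _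
  refine ⟨supOperator K, fun f x => rfl, supOperator_mono fun q => (hK q).monotone,
    fun f g _ hle hne => ⟨supOperator_mono (fun q => (hK q).monotone) hle, fun h => ?_⟩,
    fun a ha f => supOperator_smul K ha.le f, fun f hf hne x => ?_,
    fun B hB => isCompact_closure_image_supOperator K hB⟩
  · obtain ⟨x, -⟩ := DFunLike.ne_iff.mp hne
    exact (supOperator_lt_supOperator hK (lt_of_le_of_ne hle hne) x).ne (by rw [h])
  · simpa [supOperator_zero] using supOperator_lt_supOperator hK (lt_of_le_of_ne hf hne.symm) x

/-- **Properties of the risk-sensitive reward operator `T`.**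
In the discrete-time controlled chain setting (compact metric state space `S`,
compact metric action space `U`, continuous reward `r`, Borel transition kernel
`p(dy|x,u)` with full support such that the maps
`(x,u) ↦ ∫ f dp(·|x,u)`, `‖f‖ ≤ 1`, are equicontinuous), the operator
`Tf(x) := sup_{u∈U} ∫ e^{r(x,u,y)} f(y) p(dy|x,u)` maps `C(S)` into `C(S)` and
is (i) order preserving and strictly increasing on the nonnegative cone,
(ii) positively 1-homogeneous, (iii) strongly positive, and (iv) compact. -/
theorem riskSensitive_operator_properties
    {S U : Type*} [MetricSpace S] [CompactSpace S] [Nonempty S]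
    [MeasurableSpace S] [BorelSpace S]
    [MetricSpace U] [CompactSpace U] [Nonempty U]
    (r : S → U → S → ℝ)
    (hr : Continuous fun q : S × U × S => r q.1 q.2.1 q.2.2)
    (p : S → U → Measure S)
    (hprob : ∀ x u, IsProbabilityMeasure (p x u))
    (hsupp : ∀ x u, ∀ O : Set S, IsOpen O → O.Nonempty → 0 < p x u O)
    (hequi : Equicontinuous fun (f : {f : C(S, ℝ) // ‖f‖ ≤ 1}) (xu : S × U) =>
        ∫ y, f.1 y ∂(p xu.1 xu.2)) :
    ∃ T : C(S, ℝ) → C(S, ℝ),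
      (∀ (f : C(S, ℝ)) (x : S),
          T f x = ⨆ u : U, ∫ y, Real.exp (r x u y) * f y ∂(p x u)) ∧
      -- (i) order preserving …
      (∀ f g : C(S, ℝ), f ≤ g → T f ≤ T g) ∧
      -- … and strictly increasing on the cone of nonnegative functions
      (∀ f g : C(S, ℝ), 0 ≤ f → f ≤ g → f ≠ g → T f ≤ T g ∧ T f ≠ T g) ∧
      -- (ii) positively 1-homogeneous
      (∀ (a : ℝ), 0 < a → ∀ f : C(S, ℝ), T (a • f) = a • T f) ∧
      -- (iii) strongly positive
      (∀ f : C(S, ℝ), 0 ≤ f → f ≠ 0 → ∀ x, 0 < T f x) ∧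
      -- (iv) compact
      (∀ B : Set C(S, ℝ), Bornology.IsBounded B →
        IsCompact (closure (T '' B))) :=
  riskSensitive_operator_properties_general r hr p hprob hsupp hequi
end

section
/- In the discrete-time controlled chain setting, let ρ > 0 and ψ ∈ C(S) with ψ > 0 satisfy Tψ = ρψ, where Tf(x) := sup_{u∈U} ∫_S e^{r(x,u,y)} f(y) p(dy|x,u). For a Markov kernel φ from S to U (a randomized stationary Markov control), define the linear operator T_φ on C(S) by T_φ f(x) := ∫_U ∫_S e^{r(x,u,y)} f(y) p(dy|x,u) φ(du|x), and define ρ(φ) := exp( sup_{x∈S} limsup_{n→∞} (1/n) log (T_φ^n 𝟙)(x) ), where 𝟙 is the constant function 1. Then log ρ = max over Markov kernels φ from S to U of log ρ(φ); in particular the supremum over φ is attained, establishing the sufficiency of randomized stationary Markov controls. -/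
/-!
For every Markov control `φ` the operator `T_φ` is monotone and positively homogeneous on bounded
measurable functions, and `T_φ ψ ≤ T ψ = ρ ψ`; iterating, `T_φⁿ 𝟙 ≤ ρⁿ ψ / min ψ`, so the growth
rate of `T_φⁿ 𝟙` is at most `log ρ`. Conversely, equicontinuity makes
`(x, u) ↦ ∫ e^{r(x,u,y)} ψ(y) p(dy|x,u)` continuous, so it has a measurable maximiser `s`, and the
deterministic control `δ_s` satisfies `T_{δ_s} ψ = ρ ψ`, whence `ρⁿ ψ / max ψ ≤ T_{δ_s}ⁿ 𝟙` and the
growth rate `log ρ` is attained.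
-/

open MeasureTheory ProbabilityTheory Filter

/-- The linear operator associated with a randomized stationary Markov control
`φ` in the discrete-time controlled chain setting:
`T_φ f(x) := ∫_U ∫_S e^{r(x,u,y)} f(y) p(dy|x,u) φ(du|x)`. -/
noncomputable def Tcontrol {S U : Type*} [MeasurableSpace S] [MeasurableSpace U]
    (r : S → U → S → ℝ) (p : S → U → Measure S) (φ : Kernel S U)
    (f : S → ℝ) (x : S) : ℝ :=
  ∫ u, ∫ y, Real.exp (r x u y) * f y ∂(p x u) ∂(φ x)

open Topology Set Metric Real Function
open scoped BoundedContinuousFunction NNReal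

section MeasurableSelection

variable {X U : Type*} [MeasurableSpace X] [MetricSpace U] [TopologicalSpace.SeparableSpace U]
  [Nonempty U] [MeasurableSpace U]

lemma exists_measurable_nonempty_inter_closedBall {A : X → Set U}
    (hA : ∀ v, ∀ t > 0, MeasurableSet {x | (A x ∩ closedBall v t).Nonempty})
    (hne : ∀ x, (A x).Nonempty) :
    ∃ f : X → U, Measurable f ∧ ∀ x, (A x ∩ closedBall (f x) 1).Nonempty := by
  classical
  set D := TopologicalSpace.denseSeq U
  have hcover : ∀ x, ∃ k, (A x ∩ closedBall (D k) 1).Nonempty := fun x => by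
    obtain ⟨u, hu⟩ := hne x
    obtain ⟨k, hk⟩ := (TopologicalSpace.denseRange_denseSeq U).exists_dist_lt u one_pos
    exact ⟨k, u, hu, hk.le⟩
  exact ⟨fun x => D (Nat.find (hcover x)),
    Measurable.find (fun _ => measurable_const) (fun k => hA (D k) 1 one_pos) hcover,
    fun x => Nat.find_spec (hcover x)⟩

lemma exists_measurable_nonempty_inter_closedBall_of_dist_le [OpensMeasurableSpace U]
    {A : X → Set U}
    (hA : ∀ v, ∀ t > 0, MeasurableSet {x | (A x ∩ closedBall v t).Nonempty})
    {f : X → U} (hf : Measurable f) {t t' : ℝ} (ht' : 0 < t')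
    (hft : ∀ x, (A x ∩ closedBall (f x) t).Nonempty) :
    ∃ g : X → U, Measurable g ∧
      ∀ x, (A x ∩ closedBall (g x) t').Nonempty ∧ dist (g x) (f x) ≤ t' + t := by
  classical
  set D := TopologicalSpace.denseSeq U
  have hcover (x : X) :
      ∃ k, (A x ∩ closedBall (D k) t').Nonempty ∧ f x ∈ closedBall (D k) (t' + t) := by
    obtain ⟨u, huA, hu⟩ := hft x
    obtain ⟨k, hk⟩ := (TopologicalSpace.denseRange_denseSeq U).exists_dist_lt u ht'
    refine ⟨k, ⟨u, huA, mem_closedBall.2 hk.le⟩, ?_⟩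
    rw [mem_closedBall']
    calc dist (D k) (f x) ≤ dist (D k) u + dist u (f x) := dist_triangle _ _ _
      _ ≤ t' + t := add_le_add (by rw [dist_comm]; exact hk.le) (mem_closedBall.1 hu)
  refine ⟨fun x => D (Nat.find (hcover x)),
    Measurable.find (fun _ => measurable_const) (fun k => ?_) hcover,
    fun x => ⟨(Nat.find_spec (hcover x)).1, mem_closedBall'.1 (Nat.find_spec (hcover x)).2⟩⟩
  exact (hA (D k) t' ht').inter (hf measurableSet_closedBall)

/-- A weak form of the Kuratowski–Ryll-Nardzewski selection theorem: the selection is the limit of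
measurable `2⁻ᵐ`-approximate selections, each chosen from the previous one by a first-index search
along a dense sequence. -/
theorem exists_measurable_selection [CompleteSpace U] [BorelSpace U] {A : X → Set U}
    (hclosed : ∀ x, IsClosed (A x)) (hne : ∀ x, (A x).Nonempty)
    (hA : ∀ v, ∀ t > 0, MeasurableSet {x | (A x ∩ closedBall v t).Nonempty}) :
    ∃ s : X → U, Measurable s ∧ ∀ x, s x ∈ A x := by
  let Approx (m : ℕ) :=
    {f : X → U // Measurable f ∧ ∀ x, (A x ∩ closedBall (f x) (2⁻¹ ^ m)).Nonempty}
  have base : Approx 0 := by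
    choose f hf hfA using exists_measurable_nonempty_inter_closedBall hA hne
    exact ⟨f, hf, by simpa using hfA⟩
  have step (m : ℕ) (f : Approx m) : ∃ g : Approx (m + 1),
      ∀ x, dist (f.1 x) (g.1 x) ≤ 2 * 2⁻¹ ^ m := by
    obtain ⟨g, hg, hgA⟩ := exists_measurable_nonempty_inter_closedBall_of_dist_le hA f.2.1
      (by positivity : (0 : ℝ) < 2⁻¹ ^ (m + 1)) f.2.2
    refine ⟨⟨g, hg, fun x => (hgA x).1⟩, fun x => ?_⟩
    rw [dist_comm]
    have h2m : (0 : ℝ) < 2⁻¹ ^ m := by positivity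
    exact (hgA x).2.trans (by rw [pow_succ]; linarith)
  choose next hnext using step
  let F (m : ℕ) : Approx m := Nat.rec base next m
  have hconv (x : X) : ∃ u, Tendsto (fun m => (F m).1 x) atTop (𝓝 u) :=
    cauchySeq_tendsto_of_complete <|
      cauchySeq_of_le_geometric 2⁻¹ 2 (by norm_num) fun m => hnext m (F m) x
  choose s hs using hconv
  refine ⟨s, measurable_of_tendsto_metrizable (fun m => (F m).2.1) (tendsto_pi_nhds.2 hs),
    fun x => ?_⟩
  rw [(hclosed x).mem_iff_infDist_zero (hne x)]
  have hdist (m : ℕ) : infDist ((F m).1 x) (A x) ≤ 2⁻¹ ^ m := by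
    obtain ⟨u, huA, hu⟩ := (F m).2.2 x
    exact (infDist_le_dist_of_mem huA).trans (by rw [dist_comm]; exact mem_closedBall.1 hu)
  exact le_antisymm
    (le_of_tendsto_of_tendsto' (((continuous_infDist_pt (A x)).tendsto _).comp (hs x))
      (tendsto_pow_atTop_nhds_zero_of_lt_one (by norm_num) (by norm_num)) hdist)
    infDist_nonneg

end MeasurableSelection

lemma nonempty_argmax_inter_iff {U : Type*} [TopologicalSpace U] [CompactSpace U] {f : U → ℝ}
    (hf : Continuous f) {K : Set U} (hK : IsCompact K) (hKne : K.Nonempty) :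
    ({u | ∀ w, f w ≤ f u} ∩ K).Nonempty ↔ sSup (f '' K) = sSup (f '' univ) := by
  have hbdd : BddAbove (f '' univ) := isCompact_univ.bddAbove_image hf.continuousOn
  constructor
  · rintro ⟨u, hu, huK⟩
    refine le_antisymm (csSup_le_csSup hbdd (hKne.image f) (image_mono (subset_univ K))) ?_
    exact csSup_le ((hKne.mono (subset_univ K)).image f) (forall_mem_image.2 fun w _ =>
      (hu w).trans (le_csSup (hK.bddAbove_image hf.continuousOn) (mem_image_of_mem f huK)))
  · intro h
    obtain ⟨u, huK, hu⟩ := hK.exists_sSup_image_eq hKne hf.continuousOn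
    exact ⟨u, fun w => (le_csSup hbdd (mem_image_of_mem f (mem_univ w))).trans
      (by rw [← h, hu]), huK⟩

theorem exists_measurable_argmax {X : Type*} [TopologicalSpace X] [MeasurableSpace X]
    [OpensMeasurableSpace X] {U : Type*} [MetricSpace U] [CompactSpace U] [Nonempty U]
    [MeasurableSpace U] [BorelSpace U]
    {G : X × U → ℝ} (hG : Continuous G) :
    ∃ s : X → U, Measurable s ∧ ∀ x w, G (x, w) ≤ G (x, s x) := by
  have hGx (x : X) : Continuous fun u => G (x, u) := hG.comp (.prodMk_right x)
  obtain ⟨s, hs, hsA⟩ :=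
    exists_measurable_selection (A := fun x => {u | ∀ w, G (x, w) ≤ G (x, u)})
    (fun x => by
      simp only [ofPred_forall]
      exact isClosed_iInter fun w => isClosed_le continuous_const (hGx x))
    (fun x => by
      obtain ⟨u, -, hu⟩ := isCompact_univ.exists_isMaxOn univ_nonempty (hGx x).continuousOn
      exact ⟨u, fun w => hu (mem_univ w)⟩)
    (fun v t ht => by
      have hK : IsCompact (closedBall v t) := isClosed_closedBall.isCompact
      simp_rw [nonempty_argmax_inter_iff (hGx _) hK (nonempty_closedBall.2 ht.le)]
      have hsup {K : Set U} (hK : IsCompact K) :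
          Continuous fun x => sSup ((fun u => G (x, u)) '' K) :=
        hK.continuous_sSup (f := Function.curry G) hG
      exact (isClosed_eq (hsup hK) (hsup isCompact_univ)).measurableSet)
  exact ⟨s, hs, hsA⟩

lemma continuous_integral_of_equicontinuous {X S : Type*} [TopologicalSpace X]
    [TopologicalSpace S] [CompactSpace S] [MeasurableSpace S] {μ : X → Measure S}
    (h : Equicontinuous fun (f : {f : C(S, ℝ) // ‖f‖ ≤ 1}) x => ∫ y, f.1 y ∂μ x)
    (f : C(S, ℝ)) : Continuous fun x => ∫ y, f y ∂μ x := by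
  have hc : 0 < ‖f‖ + 1 := by positivity
  have hunit : ‖(‖f‖ + 1)⁻¹ • f‖ ≤ 1 := by
    rw [norm_smul, norm_inv, Real.norm_of_nonneg hc.le, inv_mul_le_one₀ hc]
    linarith
  convert (h.continuous ⟨_, hunit⟩).const_mul (‖f‖ + 1) using 2 with x
  simp [integral_const_mul, hc.ne']

lemma continuous_integral_of_continuous {X S : Type*} [TopologicalSpace X] [TopologicalSpace S]
    [CompactSpace S] [MeasurableSpace S] [OpensMeasurableSpace S] {μ : X → Measure S}
    [∀ x, IsProbabilityMeasure (μ x)]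
    (hμ : ∀ f : C(S, ℝ), Continuous fun x => ∫ y, f y ∂μ x)
    {g : X → C(S, ℝ)} (hg : Continuous g) : Continuous fun x => ∫ y, g x y ∂μ x := by
  have hint (x : X) (f : C(S, ℝ)) : Integrable f (μ x) :=
    f.continuous.integrable_of_hasCompactSupport (.of_compactSpace _)
  refine continuous_iff_continuousAt.2 fun x₀ => ?_
  have herr :
      Tendsto (fun x => ∫ y, g x y ∂μ x - ∫ y, g x₀ y ∂μ x) (𝓝 x₀) (𝓝 0) := by
    refine squeeze_zero_norm (fun x => ?_) (tendsto_iff_norm_sub_tendsto_zero.1 (hg.tendsto x₀))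
    rw [← integral_sub (hint x _) (hint x _)]
    simpa using norm_integral_le_of_norm_le_const (μ := μ x)
      (ae_of_all _ fun y => (g x - g x₀).norm_coe_le_norm y)
  simpa [ContinuousAt] using ((hμ (g x₀)).tendsto x₀).add herr

theorem measurable_of_measurable_lintegral {X Ω : Type*} [MeasurableSpace X] [TopologicalSpace Ω]
    [HasOuterApproxClosed Ω] [MeasurableSpace Ω] [BorelSpace Ω] {μ : X → Measure Ω}
    [∀ x, IsProbabilityMeasure (μ x)]
    (h : ∀ f : Ω →ᵇ ℝ≥0, Measurable fun x => ∫⁻ y, f y ∂μ x) : Measurable μ :=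
  .measure_of_isPiSystem_of_isProbabilityMeasure
    (by rw [BorelSpace.measurable_eq (α := Ω), borel_eq_generateFrom_isClosed])
    isPiSystem_isClosed
    fun _ hF => measurable_of_tendsto_metrizable (fun n => h (hF.apprSeq n))
      (tendsto_pi_nhds.2 fun x => HasOuterApproxClosed.tendsto_lintegral_apprSeq hF (μ x))

theorem measurable_of_equicontinuous_integral {X S : Type*} [TopologicalSpace X]
    [MeasurableSpace X] [OpensMeasurableSpace X] [MetricSpace S] [CompactSpace S]
    [MeasurableSpace S] [BorelSpace S] {μ : X → Measure S} [∀ x, IsProbabilityMeasure (μ x)]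
    (h : Equicontinuous fun (f : {f : C(S, ℝ) // ‖f‖ ≤ 1}) x => ∫ y, f.1 y ∂μ x) :
    Measurable μ := by
  refine measurable_of_measurable_lintegral fun f => ?_
  have hf : Continuous fun y => (f y : ℝ) := by fun_prop
  convert ENNReal.measurable_ofReal.comp
    (continuous_integral_of_equicontinuous h ⟨_, hf⟩).measurable using 1
  funext x
  exact lintegral_coe_eq_integral _
    (hf.integrable_of_hasCompactSupport (μ := μ x) (.of_compactSpace _))

def boundedMeasurable (α : Type*) [MeasurableSpace α] : Set (α → ℝ) :=
  {f | Measurable f ∧ ∃ C, ∀ a, |f a| ≤ C}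

section BoundedMeasurable

variable {α β : Type*} [MeasurableSpace α] [MeasurableSpace β]

lemma Continuous.mem_boundedMeasurable [TopologicalSpace α] [CompactSpace α]
    [OpensMeasurableSpace α] {f : α → ℝ} (hf : Continuous f) :
    f ∈ boundedMeasurable α := by
  obtain ⟨C, hC⟩ := isCompact_univ.exists_bound_of_continuousOn hf.continuousOn
  exact ⟨hf.measurable, C, fun a => hC a (mem_univ a)⟩

lemma smul_mem_boundedMeasurable :
    ∀ (c : ℝ), ∀ f ∈ boundedMeasurable α, c • f ∈ boundedMeasurable α := by
  rintro c f ⟨hfm, C, hC⟩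
  refine ⟨hfm.const_mul c, |c| * C, fun a => ?_⟩
  rw [Pi.smul_apply, smul_eq_mul, abs_mul]
  exact mul_le_mul_of_nonneg_left (hC a) (abs_nonneg c)

lemma integral_kernel_mem_boundedMeasurable (κ : Kernel α β) [IsMarkovKernel κ]
    {g : α × β → ℝ} (hg : g ∈ boundedMeasurable (α × β)) :
    (fun a => ∫ b, g (a, b) ∂κ a) ∈ boundedMeasurable α := by
  obtain ⟨hgm, C, hC⟩ := hg
  refine ⟨hgm.stronglyMeasurable.integral_kernel_prod_right'.measurable, C, fun a => ?_⟩
  simpa using norm_integral_le_of_norm_le_const (μ := κ a) (f := fun b => g (a, b))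
    (ae_of_all _ fun b => hC (a, b))

lemma integrable_prodMk_left_of_mem_boundedMeasurable {g : α × β → ℝ}
    (hg : g ∈ boundedMeasurable (α × β)) (a : α) (μ : Measure β) [IsFiniteMeasure μ] :
    Integrable (fun b => g (a, b)) μ := by
  obtain ⟨hgm, C, hC⟩ := hg
  exact .of_bound (hgm.comp measurable_prodMk_left).aestronglyMeasurable C
    (ae_of_all _ fun b => hC (a, b))

end BoundedMeasurable

lemma integral_le_of_forall_le {α : Type*} [MeasurableSpace α] {μ : Measure α}
    [IsProbabilityMeasure μ] {f : α → ℝ} (hf : Integrable f μ) {c : ℝ}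
    (h : ∀ a, f a ≤ c) :
    ∫ a, f a ∂μ ≤ c := by
  simpa using integral_mono hf (integrable_const c) h

lemma le_integral_of_forall_le {α : Type*} [MeasurableSpace α] {μ : Measure α}
    [IsProbabilityMeasure μ] {f : α → ℝ} (hf : Integrable f μ) {c : ℝ}
    (h : ∀ a, c ≤ f a) :
    c ≤ ∫ a, f a ∂μ := by
  simpa using integral_mono (integrable_const c) hf h

section Iteration

variable {E : Type*} [Preorder E] [MulAction ℝ E] [PosSMulMono ℝ E] {T : E → E} {B : Set E}

lemma iterate_le_smul_of_le (hmono : MonotoneOn T B) (hmaps : MapsTo T B B)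
    (hsmul_mem : ∀ (c : ℝ), ∀ g ∈ B, c • g ∈ B) (hT_smul : ∀ (c : ℝ) (g : E), T (c • g) = c • T g)
    {f g : E} (hf : f ∈ B) (hg : g ∈ B) {a c : ℝ} (ha : 0 ≤ a) (hc : 0 ≤ c)
    (hfg : f ≤ a • g) (hTg : T g ≤ c • g) (n : ℕ) : T^[n] f ≤ (a * c ^ n) • g := by
  induction n with
  | zero => simpa using hfg
  | succ n ih =>
    rw [Function.iterate_succ_apply']
    calc T (T^[n] f) ≤ T ((a * c ^ n) • g) := hmono (hmaps.iterate n hf) (hsmul_mem _ g hg) ih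
      _ = (a * c ^ n) • T g := hT_smul _ g
      _ ≤ (a * c ^ n) • c • g := smul_le_smul_of_nonneg_left hTg (by positivity)
      _ = (a * c ^ (n + 1)) • g := by rw [smul_smul, pow_succ, mul_assoc]

lemma smul_le_iterate_of_le (hmono : MonotoneOn T B) (hmaps : MapsTo T B B)
    (hsmul_mem : ∀ (c : ℝ), ∀ g ∈ B, c • g ∈ B) (hT_smul : ∀ (c : ℝ) (g : E), T (c • g) = c • T g)
    {f g : E} (hf : f ∈ B) (hg : g ∈ B) {a c : ℝ} (ha : 0 ≤ a) (hc : 0 ≤ c)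
    (hfg : a • g ≤ f) (hTg : c • g ≤ T g) (n : ℕ) : (a * c ^ n) • g ≤ T^[n] f := by
  induction n with
  | zero => simpa using hfg
  | succ n ih =>
    rw [Function.iterate_succ_apply']
    calc (a * c ^ (n + 1)) • g = (a * c ^ n) • c • g := by rw [smul_smul, pow_succ, mul_assoc]
      _ ≤ (a * c ^ n) • T g := smul_le_smul_of_nonneg_left hTg (by positivity)
      _ = T ((a * c ^ n) • g) := (hT_smul _ g).symm
      _ ≤ T (T^[n] f) := hmono (hsmul_mem _ g hg) (hmaps.iterate n hf) ih

end Iteration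

section Growth

lemma tendsto_inv_mul_log_const_mul_pow {a ρ : ℝ} (ha : 0 < a) (hρ : 0 < ρ) :
    Tendsto (fun n : ℕ => 1 / (n : ℝ) * log (a * ρ ^ n)) atTop (𝓝 (log ρ)) := by
  have h : Tendsto (fun n : ℕ => log a / n + log ρ) atTop (𝓝 (log ρ)) := by
    simpa using (tendsto_const_div_atTop_nhds_zero_nat (log a)).add_const (log ρ)
  refine h.congr' ((eventually_ne_atTop 0).mono fun n hn => ?_)
  dsimp only
  rw [log_mul ha.ne' (pow_ne_zero _ hρ.ne'), log_pow]
  field_simp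

lemma inv_mul_log_le_inv_mul_log {s t : ℝ} (hs : 0 < s) (hst : s ≤ t) (n : ℕ) :
    1 / (n : ℝ) * log s ≤ 1 / (n : ℝ) * log t :=
  mul_le_mul_of_nonneg_left (log_le_log hs hst) (by positivity)

variable {u : ℕ → ℝ} {a b ρ : ℝ}

lemma tendsto_inv_mul_log_of_le_of_le (ha : 0 < a) (hb : 0 < b) (hρ : 0 < ρ)
    (hlow : ∀ n, a * ρ ^ n ≤ u n) (hup : ∀ n, u n ≤ b * ρ ^ n) :
    Tendsto (fun n : ℕ => 1 / (n : ℝ) * log (u n)) atTop (𝓝 (log ρ)) :=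
  tendsto_of_tendsto_of_tendsto_of_le_of_le (tendsto_inv_mul_log_const_mul_pow ha hρ)
    (tendsto_inv_mul_log_const_mul_pow hb hρ)
    (fun n => inv_mul_log_le_inv_mul_log (by positivity) (hlow n) n)
    (fun n => inv_mul_log_le_inv_mul_log ((by positivity : 0 < a * ρ ^ n).trans_le (hlow n))
      (hup n) n)

lemma limsup_inv_mul_log_le {ε : ℝ} (ha : 0 < a) (hb : 0 < b) (hε : 0 < ε) (hρ : 0 < ρ)
    (hlow : ∀ n, a * ε ^ n ≤ u n) (hup : ∀ n, u n ≤ b * ρ ^ n) :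
    limsup (fun n : ℕ => 1 / (n : ℝ) * log (u n)) atTop ≤ log ρ := by
  have hU := tendsto_inv_mul_log_const_mul_pow hb hρ
  -- Without a lower bound, the `limsup` in `ℝ` of a sequence tending to `-∞` is a junk value.
  have hbelow : IsBoundedUnder (· ≥ ·) atTop fun n : ℕ => 1 / (n : ℝ) * log (u n) :=
    (tendsto_inv_mul_log_const_mul_pow ha hε).isBoundedUnder_ge.mono_ge
      (Eventually.of_forall fun n => inv_mul_log_le_inv_mul_log (by positivity) (hlow n) n)
  calc limsup (fun n : ℕ => 1 / (n : ℝ) * log (u n)) atTop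
      ≤ limsup (fun n : ℕ => 1 / (n : ℝ) * log (b * ρ ^ n)) atTop :=
        limsup_le_limsup (Eventually.of_forall fun n => inv_mul_log_le_inv_mul_log
          ((by positivity : 0 < a * ε ^ n).trans_le (hlow n)) (hup n) n)
          hbelow.isCoboundedUnder_le hU.isBoundedUnder_le
    _ = log ρ := hU.limsup_eq

end Growth

noncomputable def weightedExpectation {S U : Type*} [MeasurableSpace S] (r : S → U → S → ℝ)
    (p : S → U → Measure S) (f : S → ℝ) (x : S) (u : U) : ℝ :=
  ∫ y, exp (r x u y) * f y ∂(p x u)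

section ControlledChain

variable {S U : Type*} [MeasurableSpace S] [MeasurableSpace U] {r : S → U → S → ℝ}
  {p : S → U → Measure S} {φ : Kernel S U} {f g ψ : S → ℝ}

lemma Tcontrol_smul (c : ℝ) (f : S → ℝ) :
    Tcontrol r p φ (c • f) = c • Tcontrol r p φ f := by
  ext x
  simp only [Tcontrol, Pi.smul_apply, smul_eq_mul, mul_left_comm _ c, integral_const_mul]

variable [∀ x u, IsProbabilityMeasure (p x u)]

lemma exp_mul_mem_boundedMeasurable
    (hr : uncurry (uncurry r) ∈ boundedMeasurable ((S × U) × S))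
    (hf : f ∈ boundedMeasurable S) :
    (fun q : (S × U) × S => exp (r q.1.1 q.1.2 q.2) * f q.2) ∈ boundedMeasurable _ := by
  obtain ⟨hrm, R, hR⟩ := hr
  obtain ⟨hfm, C, hC⟩ := hf
  refine ⟨(measurable_exp.comp hrm).mul (hfm.comp measurable_snd), exp R * C, fun q => ?_⟩
  rw [abs_mul, abs_of_pos (exp_pos _)]
  exact mul_le_mul (exp_le_exp.2 ((le_abs_self _).trans (hR q))) (hC q.2) (abs_nonneg _)
    (exp_pos _).le

lemma weightedExpectation_mem_boundedMeasurable
    (hr : uncurry (uncurry r) ∈ boundedMeasurable ((S × U) × S))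
    (hp : Measurable (uncurry p)) (hf : f ∈ boundedMeasurable S) :
    uncurry (weightedExpectation r p f) ∈ boundedMeasurable (S × U) := by
  have : IsMarkovKernel (Kernel.mk _ hp) :=
    ⟨fun xu => inferInstanceAs (IsProbabilityMeasure (p xu.1 xu.2))⟩
  exact integral_kernel_mem_boundedMeasurable (Kernel.mk _ hp)
    (exp_mul_mem_boundedMeasurable hr hf)

variable [IsMarkovKernel φ]

lemma Tcontrol_mem_boundedMeasurable
    (hr : uncurry (uncurry r) ∈ boundedMeasurable ((S × U) × S))
    (hp : Measurable (uncurry p)) (hf : f ∈ boundedMeasurable S) :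
    Tcontrol r p φ f ∈ boundedMeasurable S :=
  integral_kernel_mem_boundedMeasurable φ (weightedExpectation_mem_boundedMeasurable hr hp hf)

lemma monotoneOn_Tcontrol
    (hr : uncurry (uncurry r) ∈ boundedMeasurable ((S × U) × S))
    (hp : Measurable (uncurry p)) : MonotoneOn (Tcontrol r p φ) (boundedMeasurable S) :=
  fun _ hf _ hg hfg x => integral_mono
    (integrable_prodMk_left_of_mem_boundedMeasurable
      (weightedExpectation_mem_boundedMeasurable hr hp hf) x _)
    (integrable_prodMk_left_of_mem_boundedMeasurable
      (weightedExpectation_mem_boundedMeasurable hr hp hg) x _)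
    fun u => integral_mono
      (integrable_prodMk_left_of_mem_boundedMeasurable
        (exp_mul_mem_boundedMeasurable hr hf) (x, u) _)
      (integrable_prodMk_left_of_mem_boundedMeasurable
        (exp_mul_mem_boundedMeasurable hr hg) (x, u) _)
      fun y => mul_le_mul_of_nonneg_left (hfg y) (exp_pos _).le

lemma Tcontrol_le_of_forall_le
    (hr : uncurry (uncurry r) ∈ boundedMeasurable ((S × U) × S))
    (hp : Measurable (uncurry p))
    (hf : f ∈ boundedMeasurable S)
    (h : ∀ x u, weightedExpectation r p f x u ≤ g x) : Tcontrol r p φ f ≤ g :=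
  fun x => integral_le_of_forall_le (integrable_prodMk_left_of_mem_boundedMeasurable
    (weightedExpectation_mem_boundedMeasurable hr hp hf) x _) (h x)

lemma le_Tcontrol_of_forall_le
    (hr : uncurry (uncurry r) ∈ boundedMeasurable ((S × U) × S))
    (hp : Measurable (uncurry p))
    (hf : f ∈ boundedMeasurable S)
    (h : ∀ x u, g x ≤ weightedExpectation r p f x u) : g ≤ Tcontrol r p φ f :=
  fun x => le_integral_of_forall_le (integrable_prodMk_left_of_mem_boundedMeasurable
    (weightedExpectation_mem_boundedMeasurable hr hp hf) x _) (h x)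


lemma Tcontrol_deterministic
    (hr : uncurry (uncurry r) ∈ boundedMeasurable ((S × U) × S))
    (hp : Measurable (uncurry p)) (hf : f ∈ boundedMeasurable S)
    {s : S → U} (hs : Measurable s) (x : S) :
    Tcontrol r p (Kernel.deterministic s hs) f x = weightedExpectation r p f x (s x) :=
  Kernel.integral_deterministic' hs
    ((weightedExpectation_mem_boundedMeasurable hr hp hf).1.comp
      measurable_prodMk_left).stronglyMeasurable

lemma const_one_mem_boundedMeasurable : (fun _ => (1 : ℝ)) ∈ boundedMeasurable S :=
  ⟨measurable_const, 1, by simp⟩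

lemma Tcontrol_iterate_one_le
    (hr : uncurry (uncurry r) ∈ boundedMeasurable ((S × U) × S))
    (hp : Measurable (uncurry p)) (hψ : ψ ∈ boundedMeasurable S)
    {m : ℝ} (hm : 0 < m) (hmψ : ∀ x, m ≤ ψ x) {ρ : ℝ} (hρ : 0 ≤ ρ)
    (hTψ : Tcontrol r p φ ψ ≤ ρ • ψ) (n : ℕ) (x : S) :
    (Tcontrol r p φ)^[n] (fun _ => 1) x ≤ ψ x / m * ρ ^ n := by
  have h := iterate_le_smul_of_le (monotoneOn_Tcontrol hr hp)
    (fun _ => Tcontrol_mem_boundedMeasurable hr hp) smul_mem_boundedMeasurable Tcontrol_smul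
    const_one_mem_boundedMeasurable hψ (inv_nonneg.2 hm.le) hρ
    (fun y => by simpa [le_inv_mul_iff₀ hm] using hmψ y) hTψ n x
  calc _ ≤ m⁻¹ * ρ ^ n * ψ x := h
    _ = ψ x / m * ρ ^ n := by ring

lemma exists_pow_le_Tcontrol_iterate_one
    (hr : uncurry (uncurry r) ∈ boundedMeasurable ((S × U) × S))
    (hp : Measurable (uncurry p)) :
    ∃ ε > 0, ∀ n x, ε ^ n ≤ (Tcontrol r p φ)^[n] (fun _ => 1) x := by
  obtain ⟨R, hR⟩ := hr.2
  have hT1 : exp (-R) • (fun _ => (1 : ℝ)) ≤ Tcontrol r p φ (fun _ => 1) :=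
    le_Tcontrol_of_forall_le hr hp const_one_mem_boundedMeasurable fun x u => by
      refine le_integral_of_forall_le (integrable_prodMk_left_of_mem_boundedMeasurable
        (exp_mul_mem_boundedMeasurable hr const_one_mem_boundedMeasurable) (x, u) _) fun y => ?_
      simpa using (abs_le.1 (hR ((x, u), y))).1
  refine ⟨exp (-R), exp_pos _, fun n x => ?_⟩
  simpa using smul_le_iterate_of_le (monotoneOn_Tcontrol hr hp)
    (fun _ => Tcontrol_mem_boundedMeasurable hr hp) smul_mem_boundedMeasurable Tcontrol_smul
    const_one_mem_boundedMeasurable const_one_mem_boundedMeasurable zero_le_one (exp_pos _).le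
    (by simp) hT1 n x

theorem limsup_log_Tcontrol_iterate_le
    (hr : uncurry (uncurry r) ∈ boundedMeasurable ((S × U) × S))
    (hp : Measurable (uncurry p)) (hψ : ψ ∈ boundedMeasurable S)
    {m : ℝ} (hm : 0 < m) (hmψ : ∀ x, m ≤ ψ x) {ρ : ℝ} (hρ : 0 < ρ)
    (hsub : ∀ x u, weightedExpectation r p ψ x u ≤ ρ * ψ x) (x : S) :
    limsup (fun n : ℕ => 1 / (n : ℝ) * log ((Tcontrol r p φ)^[n] (fun _ => 1) x)) atTop
      ≤ log ρ := by
  obtain ⟨ε, hε, hlow⟩ := exists_pow_le_Tcontrol_iterate_one (φ := φ) hr hp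
  exact limsup_inv_mul_log_le one_pos (div_pos (hm.trans_le (hmψ x)) hm) hε hρ
    (fun n => (one_mul _).trans_le (hlow n x))
    (Tcontrol_iterate_one_le hr hp hψ hm hmψ hρ.le
      (Tcontrol_le_of_forall_le hr hp hψ hsub) · x)

theorem tendsto_log_Tcontrol_deterministic_iterate
    (hr : uncurry (uncurry r) ∈ boundedMeasurable ((S × U) × S))
    (hp : Measurable (uncurry p)) (hψ : ψ ∈ boundedMeasurable S)
    {m : ℝ} (hm : 0 < m) (hmψ : ∀ x, m ≤ ψ x) {ρ : ℝ} (hρ : 0 < ρ) {s : S → U}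
    (hs : Measurable s) (hsel : ∀ x, weightedExpectation r p ψ x (s x) = ρ * ψ x) (x : S) :
    Tendsto (fun n : ℕ => 1 / (n : ℝ) *
      log ((Tcontrol r p (Kernel.deterministic s hs))^[n] (fun _ => 1) x))
      atTop (𝓝 (log ρ)) := by
  obtain ⟨M, hM⟩ := hψ.2
  have hψM (y : S) : ψ y ≤ M := (le_abs_self _).trans (hM y)
  have hMpos : 0 < M := hm.trans_le ((hmψ x).trans (hψM x))
  have hTψ : Tcontrol r p (Kernel.deterministic s hs) ψ = ρ • ψ := by
    ext y
    rw [Tcontrol_deterministic hr hp hψ, hsel, Pi.smul_apply, smul_eq_mul]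
  have hlow := smul_le_iterate_of_le (monotoneOn_Tcontrol hr hp)
    (fun _ => Tcontrol_mem_boundedMeasurable hr hp) smul_mem_boundedMeasurable Tcontrol_smul
    const_one_mem_boundedMeasurable hψ (inv_nonneg.2 hMpos.le) hρ.le
    (fun y => by simpa [inv_mul_le_iff₀ hMpos] using hψM y) hTψ.ge
  refine tendsto_inv_mul_log_of_le_of_le (div_pos (hm.trans_le (hmψ x)) hMpos)
    (div_pos (hm.trans_le (hmψ x)) hm) hρ (fun n => ?_)
    (Tcontrol_iterate_one_le hr hp hψ hm hmψ hρ.le hTψ.le · x)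
  calc ψ x / M * ρ ^ n = (M⁻¹ * ρ ^ n) • ψ x := by rw [smul_eq_mul]; ring
    _ ≤ _ := hlow n x

end ControlledChain

theorem sufficiency_of_markov_controls_general
    {S U : Type*} [MetricSpace S] [CompactSpace S] [Nonempty S]
    [MeasurableSpace S] [BorelSpace S]
    [MetricSpace U] [CompactSpace U] [Nonempty U]
    [MeasurableSpace U] [BorelSpace U]
    (r : S → U → S → ℝ)
    (hr : Continuous fun q : S × U × S => r q.1 q.2.1 q.2.2)
    (p : S → U → Measure S)
    (hprob : ∀ x u, IsProbabilityMeasure (p x u))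
    (hequi : Equicontinuous fun (f : {f : C(S, ℝ) // ‖f‖ ≤ 1}) (xu : S × U) =>
        ∫ y, f.1 y ∂(p xu.1 xu.2))
    (T : (S → ℝ) → S → ℝ)
    (hT : ∀ (f : S → ℝ) (x : S),
        T f x = ⨆ u : U, ∫ y, Real.exp (r x u y) * f y ∂(p x u))
    (ρ : ℝ) (hρ : 0 < ρ) (ψ : C(S, ℝ)) (hψ : ∀ x, 0 < ψ x)
    (heig : ∀ x, T ψ x = ρ * ψ x) :
    IsGreatest
      {c : ℝ | ∃ φ : Kernel S U, IsMarkovKernel φ ∧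
        c = Real.log (Real.exp (⨆ x : S, limsup
              (fun n : ℕ => (1 / (n : ℝ)) *
                Real.log ((Tcontrol r p φ)^[n] (fun _ => 1) x)) atTop))}
      (Real.log ρ) := by
  have (xu : S × U) : IsProbabilityMeasure (uncurry p xu) := hprob xu.1 xu.2
  have hp : Measurable (uncurry p) := measurable_of_equicontinuous_integral hequi
  have hr' : uncurry (uncurry r) ∈ boundedMeasurable ((S × U) × S) :=
    (hr.comp (by fun_prop : Continuous fun q : (S × U) × S => (q.1.1, q.1.2, q.2))
      ).mem_boundedMeasurable
  have hψ' : ⇑ψ ∈ boundedMeasurable S := ψ.continuous.mem_boundedMeasurable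
  obtain ⟨x₀, -, hx₀⟩ :=
    isCompact_univ.exists_isMinOn univ_nonempty ψ.continuous.continuousOn
  have hmψ (x : S) : ψ x₀ ≤ ψ x := hx₀ (mem_univ x)
  have hG : Continuous (uncurry (weightedExpectation r p ψ)) :=
    continuous_integral_of_continuous (continuous_integral_of_equicontinuous hequi)
      (ContinuousMap.curry ⟨fun q : (S × U) × S => exp (r q.1.1 q.1.2 q.2) * ψ q.2,
        by fun_prop⟩).continuous
  obtain ⟨s, hs, hsmax⟩ := exists_measurable_argmax hG
  have hsup (x : S) : ⨆ u, weightedExpectation r p ψ x u = ρ * ψ x :=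
    (hT ψ x).symm.trans (heig x)
  have hsub (x : S) (u : U) : weightedExpectation r p ψ x u ≤ ρ * ψ x :=
    (le_ciSup ⟨_, forall_mem_range.2 (hsmax x)⟩ u).trans_eq (hsup x)
  have hsel (x : S) : weightedExpectation r p ψ x (s x) = ρ * ψ x :=
    (hsub x (s x)).antisymm ((hsup x).symm.le.trans (ciSup_le (hsmax x)))
  refine ⟨⟨Kernel.deterministic s hs, inferInstance, ?_⟩, ?_⟩
  · rw [Real.log_exp]
    simp_rw [(tendsto_log_Tcontrol_deterministic_iterate hr' hp hψ' (hψ x₀) hmψ hρ hs hsel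
      _).limsup_eq, ciSup_const]
  · rintro _ ⟨φ, hφ, rfl⟩
    rw [Real.log_exp]
    exact ciSup_le (limsup_log_Tcontrol_iterate_le hr' hp hψ' (hψ x₀) hmψ hρ hsub)

/-- **Sufficiency of randomized stationary Markov controls.**
In the discrete-time controlled chain setting, let `ρ > 0` and everywhere
positive `ψ ∈ C(S)` satisfy `Tψ = ρψ`.  For a Markov kernel `φ` from `S` to `U`
define `ρ(φ) := exp( sup_{x∈S} limsup_n (1/n) log (T_φ^n 𝟙)(x) )`.  Then
`log ρ` is the **maximum** over all Markov kernels `φ` of `log ρ(φ)`; in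
particular the supremum over `φ` is attained. -/
theorem sufficiency_of_markov_controls
    {S U : Type*} [MetricSpace S] [CompactSpace S] [Nonempty S]
    [MeasurableSpace S] [BorelSpace S]
    [MetricSpace U] [CompactSpace U] [Nonempty U]
    [MeasurableSpace U] [BorelSpace U]
    (r : S → U → S → ℝ)
    (hr : Continuous fun q : S × U × S => r q.1 q.2.1 q.2.2)
    (p : S → U → Measure S)
    (hprob : ∀ x u, IsProbabilityMeasure (p x u))
    (hsupp : ∀ x u, ∀ O : Set S, IsOpen O → O.Nonempty → 0 < p x u O)
    (hequi : Equicontinuous fun (f : {f : C(S, ℝ) // ‖f‖ ≤ 1}) (xu : S × U) =>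
        ∫ y, f.1 y ∂(p xu.1 xu.2))
    (T : (S → ℝ) → S → ℝ)
    (hT : ∀ (f : S → ℝ) (x : S),
        T f x = ⨆ u : U, ∫ y, Real.exp (r x u y) * f y ∂(p x u))
    (ρ : ℝ) (hρ : 0 < ρ) (ψ : C(S, ℝ)) (hψ : ∀ x, 0 < ψ x)
    (heig : ∀ x, T ψ x = ρ * ψ x) :
    IsGreatest
      {c : ℝ | ∃ φ : Kernel S U, IsMarkovKernel φ ∧
        c = Real.log (Real.exp (⨆ x : S, limsup
              (fun n : ℕ => (1 / (n : ℝ)) *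
                Real.log ((Tcontrol r p φ)^[n] (fun _ => 1) x)) atTop))}
      (Real.log ρ) :=
  sufficiency_of_markov_controls_general r hr p hprob hequi T hT ρ hρ ψ hψ heig
end

section
/- Let J be a nonempty finite set, p a probability vector on J with p_j > 0 for every j, and g : J → ℝ. Then the supremum over all probability vectors q on J of Σ_j q_j g_j − Σ_j q_j log(q_j/p_j) (with the convention 0 log 0 = 0) equals log Σ_j p_j e^{g_j}, and it is attained uniquely at the 'twisted' probability vector q*_j := p_j e^{g_j} / Σ_k p_k e^{g_k} (the Gibbs variational principle). -/
/-!
Writing `q*` for the twisted vector and `Z = ∑ k, p k * exp (g k)`, one has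
`log (q j / p j) = log (q j / q* j) + g j - log Z` termwise, so for every probability vector `q`
the objective equals `log Z - D(q‖q*)`. Gibbs' inequality `D(q‖q*) ≥ 0`, with equality only at
`q = q*`, then gives both the value of the supremum and the uniqueness of the maximizer; it
follows from `r * klFun (q / r) = q * log (q / r) + r - q` and `klFun ≥ 0` with its only zero
at `1`.
-/

section GibbsVariationalPrinciple

open Real InformationTheory

variable {J : Type*} [Fintype J]

/-- `D(q‖r)`; since `0 * log _ = 0`, the convention `0 log 0 = 0` holds without a case split. -/
noncomputable def relEntropy (q r : J → ℝ) : ℝ := ∑ j, q j * log (q j / r j)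

noncomputable def gibbsTwist (p g : J → ℝ) (j : J) : ℝ :=
  p j * exp (g j) / ∑ k, p k * exp (g k)

lemma sum_ite_pos_mul_log_div_eq_relEntropy {q : J → ℝ} (hq : ∀ j, 0 ≤ q j) (r : J → ℝ) :
    ∑ j, (if 0 < q j then q j * log (q j / r j) else 0) = relEntropy q r := by
  refine Finset.sum_congr rfl fun j _ => ?_
  rcases (hq j).lt_or_eq with hpos | hzero
  · rw [if_pos hpos]
  · rw [if_neg hzero.not_lt, ← hzero, zero_mul]

lemma mul_klFun_div {q r : ℝ} (hr : r ≠ 0) :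
    r * klFun (q / r) = q * log (q / r) + r - q := by
  rw [klFun_apply]
  field_simp

lemma relEntropy_eq_sum_mul_klFun {q r : J → ℝ} (hr : ∀ j, r j ≠ 0)
    (hsum : ∑ j, q j = ∑ j, r j) :
    relEntropy q r = ∑ j, r j * klFun (q j / r j) := by
  simp only [mul_klFun_div (hr _), Finset.sum_sub_distrib, Finset.sum_add_distrib, hsum,
    relEntropy]
  ring

lemma relEntropy_nonneg {q r : J → ℝ} (hq : ∀ j, 0 ≤ q j) (hr : ∀ j, 0 < r j)
    (hsum : ∑ j, q j = ∑ j, r j) :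
    0 ≤ relEntropy q r := by
  rw [relEntropy_eq_sum_mul_klFun (fun j => (hr j).ne') hsum]
  exact Finset.sum_nonneg fun j _ =>
    mul_nonneg (hr j).le (klFun_nonneg (div_nonneg (hq j) (hr j).le))

lemma eq_of_relEntropy_eq_zero {q r : J → ℝ} (hq : ∀ j, 0 ≤ q j) (hr : ∀ j, 0 < r j)
    (hsum : ∑ j, q j = ∑ j, r j) (h : relEntropy q r = 0) :
    q = r := by
  rw [relEntropy_eq_sum_mul_klFun (fun j => (hr j).ne') hsum,
    Finset.sum_eq_zero_iff_of_nonneg fun j _ =>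
      mul_nonneg (hr j).le (klFun_nonneg (div_nonneg (hq j) (hr j).le))] at h
  funext j
  have hklFun := (mul_eq_zero.mp (h j (Finset.mem_univ j))).resolve_left (hr j).ne'
  exact (div_eq_one_iff_eq (hr j).ne').mp
    ((klFun_eq_zero_iff (div_nonneg (hq j) (hr j).le)).mp hklFun)

lemma relEntropy_self (r : J → ℝ) : relEntropy r r = 0 := by
  simp [relEntropy]

section Twist

variable [Nonempty J] {p : J → ℝ}

lemma sum_mul_exp_pos (hp : ∀ j, 0 < p j) (g : J → ℝ) : 0 < ∑ k, p k * exp (g k) :=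
  Finset.sum_pos (fun k _ => mul_pos (hp k) (exp_pos _)) Finset.univ_nonempty

lemma gibbsTwist_pos (hp : ∀ j, 0 < p j) (g : J → ℝ) (j : J) : 0 < gibbsTwist p g j :=
  div_pos (mul_pos (hp j) (exp_pos _)) (sum_mul_exp_pos hp g)

lemma sum_gibbsTwist (hp : ∀ j, 0 < p j) (g : J → ℝ) : ∑ j, gibbsTwist p g j = 1 := by
  simp only [gibbsTwist]
  rw [← Finset.sum_div, div_self (sum_mul_exp_pos hp g).ne']

lemma log_div_eq_log_div_gibbsTwist (hp : ∀ j, 0 < p j) (g : J → ℝ) {x : ℝ} (hx : x ≠ 0) (j : J) :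
    log (x / p j) = log (x / gibbsTwist p g j) + g j - log (∑ k, p k * exp (g k)) := by
  have hZ := (sum_mul_exp_pos hp g).ne'
  have hsplit : x / p j = x / gibbsTwist p g j * (exp (g j) / ∑ k, p k * exp (g k)) := by
    rw [gibbsTwist]
    field_simp [(hp j).ne']
  rw [hsplit, log_mul (div_ne_zero hx (gibbsTwist_pos hp g j).ne') (by positivity),
    log_div (exp_ne_zero _) hZ, log_exp]
  ring

lemma sum_mul_sub_relEntropy_eq (hp : ∀ j, 0 < p j) (g : J → ℝ) {q : J → ℝ} (hq : ∑ j, q j = 1) :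
    ∑ j, q j * g j - relEntropy q p =
      log (∑ k, p k * exp (g k)) - relEntropy q (gibbsTwist p g) := by
  have hterm : ∀ j, q j * log (q j / p j) =
      q j * log (q j / gibbsTwist p g j) + q j * g j - q j * log (∑ k, p k * exp (g k)) := by
    intro j
    rcases eq_or_ne (q j) 0 with hzero | hne
    · simp [hzero]
    · rw [log_div_eq_log_div_gibbsTwist hp g hne]
      ring
  simp only [relEntropy, hterm, Finset.sum_sub_distrib, Finset.sum_add_distrib,
    ← Finset.sum_mul, hq]
  ring

end Twist

end GibbsVariationalPrinciple

theorem gibbs_variational_principle_general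
    {J : Type*} [Fintype J] [Nonempty J]
    (p : J → ℝ) (hp : ∀ j, 0 < p j)
    (g : J → ℝ)
    (qstar : J → ℝ)
    (hqstar : ∀ j, qstar j = p j * Real.exp (g j) / ∑ k, p k * Real.exp (g k)) :
    IsGreatest
      {v : ℝ | ∃ q : J → ℝ, (∀ j, 0 ≤ q j) ∧ (∑ j, q j = 1) ∧
        v = (∑ j, q j * g j) -
            ∑ j, (if 0 < q j then q j * Real.log (q j / p j) else 0)}
      (Real.log (∑ j, p j * Real.exp (g j))) ∧
    ((∑ j, qstar j * g j) -
        (∑ j, (if 0 < qstar j then qstar j * Real.log (qstar j / p j) else 0)) =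
      Real.log (∑ j, p j * Real.exp (g j))) ∧
    (∀ q : J → ℝ, (∀ j, 0 ≤ q j) → (∑ j, q j = 1) →
      ((∑ j, q j * g j) -
          (∑ j, (if 0 < q j then q j * Real.log (q j / p j) else 0)) =
        Real.log (∑ j, p j * Real.exp (g j))) →
      q = qstar) := by
  obtain rfl : qstar = gibbsTwist p g := funext hqstar
  have hpos := gibbsTwist_pos hp g
  have hsum := sum_gibbsTwist hp g
  have objective : ∀ q : J → ℝ, (∀ j, 0 ≤ q j) → ∑ j, q j = 1 →
      (∑ j, q j * g j) - ∑ j, (if 0 < q j then q j * Real.log (q j / p j) else 0) =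
        Real.log (∑ k, p k * Real.exp (g k)) - relEntropy q (gibbsTwist p g) :=
    fun q hq0 hq1 => by
      rw [sum_ite_pos_mul_log_div_eq_relEntropy hq0, sum_mul_sub_relEntropy_eq hp g hq1]
  have optimal := objective _ (fun j => (hpos j).le) hsum
  rw [relEntropy_self, sub_zero] at optimal
  refine ⟨⟨⟨_, fun j => (hpos j).le, hsum, optimal.symm⟩, ?_⟩, optimal, ?_⟩
  · rintro v ⟨q, hq0, hq1, rfl⟩
    rw [objective q hq0 hq1]
    linarith [relEntropy_nonneg hq0 hpos (hq1.trans hsum.symm)]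
  · intro q hq0 hq1 hmax
    rw [objective q hq0 hq1] at hmax
    exact eq_of_relEntropy_eq_zero hq0 hpos (hq1.trans hsum.symm) (by linarith)

/-- **Gibbs variational principle** on a nonempty finite set `J`.
For a strictly positive probability vector `p` on `J` and `g : J → ℝ`, the
supremum over probability vectors `q` of
`∑ j, q j * g j − ∑ j, q j * log (q j / p j)` (with `0 log 0 = 0`) equals
`log ∑ j, p j * exp (g j)`, is attained, and the maximizer is unique, namely
the twisted vector `q* j = p j * exp (g j) / ∑ k, p k * exp (g k)`. -/
theorem gibbs_variational_principle
    {J : Type*} [Fintype J] [Nonempty J]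
    (p : J → ℝ) (hp : ∀ j, 0 < p j) (hpsum : ∑ j, p j = 1)
    (g : J → ℝ)
    (qstar : J → ℝ)
    (hqstar : ∀ j, qstar j = p j * Real.exp (g j) / ∑ k, p k * Real.exp (g k)) :
    IsGreatest
      {v : ℝ | ∃ q : J → ℝ, (∀ j, 0 ≤ q j) ∧ (∑ j, q j = 1) ∧
        v = (∑ j, q j * g j) -
            ∑ j, (if 0 < q j then q j * Real.log (q j / p j) else 0)}
      (Real.log (∑ j, p j * Real.exp (g j))) ∧
    ((∑ j, qstar j * g j) -
        (∑ j, (if 0 < qstar j then qstar j * Real.log (qstar j / p j) else 0)) =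
      Real.log (∑ j, p j * Real.exp (g j))) ∧
    (∀ q : J → ℝ, (∀ j, 0 ≤ q j) → (∑ j, q j = 1) →
      ((∑ j, q j * g j) -
          (∑ j, (if 0 < q j then q j * Real.log (q j / p j) else 0)) =
        Real.log (∑ j, p j * Real.exp (g j))) →
      q = qstar) :=
  gibbs_variational_principle_general p hp g qstar hqstar
end
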